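/- arXiv:1504.02850 — 4 statements merged into one kernel-verified Lean document; each statement's English description precedes it below -/
import Mathlib

section
/- Fix a density h ∈ 𝒟, let Q⋄(f,g) := (∫_X f dμ)(∫_X g dμ)·h, and let Q be a quadratic stochastic operator with d̂_u(Q,Q⋄) = ε < 1/3. Then sup_{u,v∈𝒟} ‖ℚⁿ(u) − ℚⁿ(v)‖₁ ≤ 2·(3ε)^{n−1} for all n ≥ 1, and Q is norm mixing. Consequently the open d̂_u-ball of radius 1/3 around Q⋄ is contained in the set of norm mixing quadratic stochastic operators. -/
open MeasureTheory Filter Topology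

noncomputable section

/-- The set of densities in `L¹(μ)`. -/
def Density {X : Type*} [MeasurableSpace X] (μ : Measure X) : Set (Lp ℝ 1 μ) :=
  {f | 0 ≤ f ∧ ‖f‖ = 1}

/-- `Q : L¹ × L¹ → L¹` is a quadratic stochastic operator: bilinear, positivity preserving,
symmetric and `‖Q(f,g)‖₁ = ‖f‖₁ ‖g‖₁` for `f, g ≥ 0`. -/
structure IsQSO {X : Type*} [MeasurableSpace X] (μ : Measure X)
    (Q : Lp ℝ 1 μ → Lp ℝ 1 μ → Lp ℝ 1 μ) : Prop where
  add_left : ∀ f f' g, Q (f + f') g = Q f g + Q f' g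
  smul_left : ∀ (c : ℝ) f g, Q (c • f) g = c • Q f g
  add_right : ∀ f g g', Q f (g + g') = Q f g + Q f g'
  smul_right : ∀ (c : ℝ) f g, Q f (c • g) = c • Q f g
  nonneg : ∀ f g, 0 ≤ f → 0 ≤ g → 0 ≤ Q f g
  symm : ∀ f g, Q f g = Q g f
  norm_mul : ∀ f g, 0 ≤ f → 0 ≤ g → ‖Q f g‖ = ‖f‖ * ‖g‖

/-- The quadratic map `ℚ(f) = Q(f,f)`. -/
def QQ {X : Type*} [MeasurableSpace X] {μ : Measure X}
    (Q : Lp ℝ 1 μ → Lp ℝ 1 μ → Lp ℝ 1 μ) (f : Lp ℝ 1 μ) : Lp ℝ 1 μ := Q f f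

/-- The iterates `ℚⁿ`. -/
def Qiter {X : Type*} [MeasurableSpace X] {μ : Measure X}
    (Q : Lp ℝ 1 μ → Lp ℝ 1 μ → Lp ℝ 1 μ) (n : ℕ) : Lp ℝ 1 μ → Lp ℝ 1 μ := (QQ Q)^[n]

/-- `Pchain Q f n = P_f^{[0,n]}`, the nonhomogeneous Markov chain associated with `Q`
and the density `f`, i.e. `P_f^{[0,0]} = id` and
`P_f^{[0,n+1]}(g) = Q(ℚⁿ(f), P_f^{[0,n]}(g))`. -/
def Pchain {X : Type*} [MeasurableSpace X] {μ : Measure X}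
    (Q : Lp ℝ 1 μ → Lp ℝ 1 μ → Lp ℝ 1 μ) (f : Lp ℝ 1 μ) :
    ℕ → Lp ℝ 1 μ → Lp ℝ 1 μ
  | 0 => id
  | n + 1 => fun g => Q (Qiter Q n f) (Pchain Q f n g)

/-- The metric `d_u(Q₁,Q₂) = sup_{f ∈ 𝒟} ‖ℚ₁(f) - ℚ₂(f)‖₁`. -/
def du {X : Type*} [MeasurableSpace X] (μ : Measure X)
    (Q₁ Q₂ : Lp ℝ 1 μ → Lp ℝ 1 μ → Lp ℝ 1 μ) : ℝ :=
  ⨆ f : Density μ, ‖Q₁ f f - Q₂ f f‖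

/-- The metric `d̂_u(Q₁,Q₂) = sup_{f,g ∈ 𝒟} ‖Q₁(f,g) - Q₂(f,g)‖₁`. -/
def dhat {X : Type*} [MeasurableSpace X] (μ : Measure X)
    (Q₁ Q₂ : Lp ℝ 1 μ → Lp ℝ 1 μ → Lp ℝ 1 μ) : ℝ :=
  ⨆ f : Density μ, ⨆ g : Density μ, ‖Q₁ f g - Q₂ f g‖

/-- `supDiff μ Q n = sup_{f,g,h ∈ 𝒟} ‖P_f^{[0,n]}(g) - P_f^{[0,n]}(h)‖₁`. -/
def supDiff {X : Type*} [MeasurableSpace X] (μ : Measure X)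
    (Q : Lp ℝ 1 μ → Lp ℝ 1 μ → Lp ℝ 1 μ) (n : ℕ) : ℝ :=
  ⨆ f : Density μ, ⨆ g : Density μ, ⨆ h : Density μ,
    ‖Pchain Q f n g - Pchain Q f n h‖

/-- `Q` is norm quasi-mixing. -/
def NormQuasiMixing {X : Type*} [MeasurableSpace X] (μ : Measure X)
    (Q : Lp ℝ 1 μ → Lp ℝ 1 μ → Lp ℝ 1 μ) : Prop :=
  Tendsto (fun n => supDiff μ Q n) atTop (𝓝 0)

/-- `Q` is norm mixing (uniformly asymptotically stable). -/
def NormMixing {X : Type*} [MeasurableSpace X] (μ : Measure X)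
    (Q : Lp ℝ 1 μ → Lp ℝ 1 μ → Lp ℝ 1 μ) : Prop :=
  ∃ f ∈ Density μ,
    Tendsto (fun n => ⨆ g : Density μ, ‖Qiter Q n g - f‖) atTop (𝓝 0)

end

section Aux

open MeasureTheory

variable {X : Type*} [MeasurableSpace X] {μ : Measure X}

lemma lp_integral_add (f g : Lp ℝ 1 μ) :
    ∫ a, (f + g) a ∂μ = (∫ a, f a ∂μ) + ∫ a, g a ∂μ := by
  rw [integral_congr_ae (Lp.coeFn_add f g)]
  exact integral_add (L1.integrable_coeFn f) (L1.integrable_coeFn g)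

lemma lp_integral_sub (f g : Lp ℝ 1 μ) :
    ∫ a, (f - g) a ∂μ = (∫ a, f a ∂μ) - ∫ a, g a ∂μ := by
  rw [integral_congr_ae (Lp.coeFn_sub f g)]
  exact integral_sub (L1.integrable_coeFn f) (L1.integrable_coeFn g)

lemma lp_integral_smul (c : ℝ) (f : Lp ℝ 1 μ) :
    ∫ a, (c • f) a ∂μ = c * ∫ a, f a ∂μ := by
  rw [integral_congr_ae (Lp.coeFn_smul c f)]
  simpa using integral_smul c (fun a => f a)

lemma lp_norm_eq_integral {f : Lp ℝ 1 μ} (hf : 0 ≤ f) : ‖f‖ = ∫ a, f a ∂μ := by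
  rw [L1.norm_eq_integral_norm]
  refine integral_congr_ae ?_
  filter_upwards [(Lp.coeFn_nonneg f).2 hf] with a ha
  exact Real.norm_of_nonneg ha

lemma density_integral {f : Lp ℝ 1 μ} (hf : f ∈ Density μ) : ∫ a, f a ∂μ = 1 :=
  (lp_norm_eq_integral hf.1).symm.trans hf.2

/-- Splitting a zero-integral element of `L¹` into positive and negative parts of
equal norm `‖w‖/2`. -/
lemma lp_split (w : Lp ℝ 1 μ) (hw : ∫ a, w a ∂μ = 0) :
    ∃ p q : Lp ℝ 1 μ, 0 ≤ p ∧ 0 ≤ q ∧ w = p - q ∧ ‖p‖ = ‖w‖ / 2 ∧ ‖q‖ = ‖w‖ / 2 := by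
  set p := Lp.posPart w
  set q := Lp.negPart w
  have hp : 0 ≤ p := by
    rw [← Lp.coeFn_nonneg]
    filter_upwards [Lp.coeFn_posPart w] with a ha
    rw [ha]; exact le_max_right _ _
  have hq : 0 ≤ q := by
    rw [← Lp.coeFn_nonneg]
    filter_upwards [Lp.coeFn_negPart_eq_max w] with a ha
    rw [ha]; exact le_max_right _ _
  have hwpq : w = p - q := by
    apply Lp.ext
    filter_upwards [Lp.coeFn_sub p q, Lp.coeFn_posPart w, Lp.coeFn_negPart w] with a h1 h2 h3
    rw [h1, Pi.sub_apply, h2, h3, sub_neg_eq_add, max_add_min, add_zero]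
  have hdiff : ‖p‖ - ‖q‖ = 0 := by
    rw [← L1.integral_eq_norm_posPart_sub w, L1.integral_eq_integral, hw]
  have hsum : ‖p‖ + ‖q‖ = ‖w‖ := by
    rw [lp_norm_eq_integral hp, lp_norm_eq_integral hq, L1.norm_eq_integral_norm w,
      ← integral_add (L1.integrable_coeFn p) (L1.integrable_coeFn q)]
    refine integral_congr_ae ?_
    filter_upwards [Lp.coeFn_posPart w, Lp.coeFn_negPart w] with a h2 h3
    rw [h2, h3, Real.norm_eq_abs]
    rcases le_total (w a) 0 with hwa | hwa
    · rw [max_eq_right hwa, min_eq_left hwa, abs_of_nonpos hwa]; ring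
    · rw [max_eq_left hwa, min_eq_right hwa, abs_of_nonneg hwa]; ring
  exact ⟨p, q, hp, hq, hwpq, by linarith, by linarith⟩

variable (h : Lp ℝ 1 μ) (hh : h ∈ Density μ)
  (Qd : Lp ℝ 1 μ → Lp ℝ 1 μ → Lp ℝ 1 μ)
  (hQd : ∀ f g : Lp ℝ 1 μ, Qd f g = ((∫ a, f a ∂μ) * ∫ a, g a ∂μ) • h)
  (Q : Lp ℝ 1 μ → Lp ℝ 1 μ → Lp ℝ 1 μ) (hQ : IsQSO μ Q)

include hh hQd hQ

lemma term_le_two {f g : Lp ℝ 1 μ} (hf : f ∈ Density μ) (hg : g ∈ Density μ) :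
    ‖Q f g - Qd f g‖ ≤ 2 := by
  have h1 : ‖Q f g‖ = 1 := by
    rw [hQ.norm_mul f g hf.1 hg.1, hf.2, hg.2, one_mul]
  have h2 : ‖Qd f g‖ = 1 := by
    rw [hQd, norm_smul, density_integral hf, density_integral hg, hh.2]
    norm_num
  calc ‖Q f g - Qd f g‖ ≤ ‖Q f g‖ + ‖Qd f g‖ := norm_sub_le _ _
    _ = 2 := by rw [h1, h2]; norm_num

lemma le_dhat_of_density (f g : Density μ) :
    ‖Q f.1 g.1 - Qd f.1 g.1‖ ≤ dhat μ Q Qd := by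
  have hbdd : ∀ f : Density μ,
      BddAbove (Set.range fun g : Density μ => ‖Q f.1 g.1 - Qd f.1 g.1‖) := by
    intro f
    refine ⟨2, ?_⟩
    rintro x ⟨g, rfl⟩
    exact term_le_two h hh Qd hQd Q hQ f.2 g.2
  have h1 : ‖Q f.1 g.1 - Qd f.1 g.1‖ ≤ ⨆ g : Density μ, ‖Q f.1 g.1 - Qd f.1 g.1‖ :=
    le_ciSup (hbdd f) g
  refine h1.trans ?_
  refine le_ciSup (f := fun f : Density μ => ⨆ g : Density μ, ‖Q f.1 g.1 - Qd f.1 g.1‖) ?_ f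
  refine ⟨2, ?_⟩
  rintro x ⟨f, rfl⟩
  exact Real.iSup_le (fun g => term_le_two h hh Qd hQd Q hQ f.2 g.2) (by norm_num)

lemma dhat_nn : 0 ≤ dhat μ Q Qd :=
  (norm_nonneg _).trans (le_dhat_of_density h hh Qd hQd Q hQ ⟨h, hh⟩ ⟨h, hh⟩)

lemma scaled_bound {a g : Lp ℝ 1 μ} (ha : 0 ≤ a) (hg : g ∈ Density μ) :
    ‖Q a g - Qd a g‖ ≤ dhat μ Q Qd * ‖a‖ := by
  rcases eq_or_ne a 0 with rfl | hne
  · have hQ0 : Q 0 g = 0 := by simpa using hQ.smul_left 0 0 g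
    have hint0 : ∫ x, (0 : Lp ℝ 1 μ) x ∂μ = 0 := by
      rw [integral_congr_ae (Lp.coeFn_zero ℝ 1 μ)]; simp
    have hQd0 : Qd 0 g = 0 := by rw [hQd, hint0, zero_mul, zero_smul]
    simp [hQ0, hQd0]
  · have hc : (0 : ℝ) < ‖a‖ := norm_pos_iff.2 hne
    set a' : Lp ℝ 1 μ := ‖a‖⁻¹ • a with ha'
    have ha'mem : a' ∈ Density μ := by
      constructor
      · rw [← Lp.coeFn_nonneg]
        filter_upwards [Lp.coeFn_smul (‖a‖⁻¹) a, (Lp.coeFn_nonneg a).2 ha] with x hx1 hx2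
        rw [hx1]
        exact mul_nonneg (inv_nonneg.2 hc.le) hx2
      · rw [norm_smul, norm_inv, norm_norm, inv_mul_cancel₀ hc.ne']
    have haa : a = ‖a‖ • a' := by rw [ha', smul_inv_smul₀ hc.ne']
    have hQa : Q a g = ‖a‖ • Q a' g := by rw [← hQ.smul_left, ← haa]
    have hQda : Qd a g = ‖a‖ • Qd a' g := by
      rw [hQd, hQd, smul_smul]
      congr 1
      rw [ha', lp_integral_smul]
      field_simp
    rw [hQa, hQda, ← smul_sub, norm_smul, norm_norm, mul_comm]
    exact mul_le_mul_of_nonneg_right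
      (le_dhat_of_density h hh Qd hQd Q hQ ⟨a', ha'mem⟩ ⟨g, hg⟩) hc.le

/-- The key contraction estimate. -/
lemma contract {u v : Lp ℝ 1 μ} (hu : u ∈ Density μ) (hv : v ∈ Density μ) :
    ‖Q u u - Q v v‖ ≤ 2 * dhat μ Q Qd * ‖u - v‖ := by
  have hw0 : ∫ a, (u - v) a ∂μ = 0 := by
    rw [lp_integral_sub, density_integral hu, density_integral hv, sub_self]
  obtain ⟨p, q, hp, hq, hwpq, hpn, hqn⟩ := lp_split (u - v) hw0
  have hsub_l : ∀ f f' g : Lp ℝ 1 μ, Q (f - f') g = Q f g - Q f' g := by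
    intro f f' g
    have hneg : Q (-f') g = -Q f' g := by simpa using hQ.smul_left (-1) f' g
    rw [sub_eq_add_neg, hQ.add_left, hneg, sub_eq_add_neg]
  have key : Q u u - Q v v = Q (u - v) u + Q (u - v) v := by
    rw [hsub_l u v u, hsub_l u v v, hQ.symm v u]
    abel
  have hQdpq : ∀ g : Lp ℝ 1 μ, Qd p g = Qd q g := by
    intro g
    have hint : ∫ a, p a ∂μ = ∫ a, q a ∂μ := by
      rw [← lp_norm_eq_integral hp, ← lp_norm_eq_integral hq, hpn, hqn]
    rw [hQd, hQd, hint]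
  have expand : Q u u - Q v v =
      (Q p u - Qd p u) - (Q q u - Qd q u) + ((Q p v - Qd p v) - (Q q v - Qd q v)) := by
    rw [key, hwpq, hsub_l p q u, hsub_l p q v, hQdpq u, hQdpq v]
    abel
  have b1 := scaled_bound h hh Qd hQd Q hQ hp hu
  have b2 := scaled_bound h hh Qd hQd Q hQ hq hu
  have b3 := scaled_bound h hh Qd hQd Q hQ hp hv
  have b4 := scaled_bound h hh Qd hQd Q hQ hq hv
  have hδ := dhat_nn h hh Qd hQd Q hQ
  calc ‖Q u u - Q v v‖
      = ‖(Q p u - Qd p u) - (Q q u - Qd q u) + ((Q p v - Qd p v) - (Q q v - Qd q v))‖ := by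
        rw [expand]
    _ ≤ ‖(Q p u - Qd p u) - (Q q u - Qd q u)‖ + ‖(Q p v - Qd p v) - (Q q v - Qd q v)‖ :=
        norm_add_le _ _
    _ ≤ (‖Q p u - Qd p u‖ + ‖Q q u - Qd q u‖) + (‖Q p v - Qd p v‖ + ‖Q q v - Qd q v‖) := by
        gcongr <;> exact norm_sub_le _ _
    _ ≤ (dhat μ Q Qd * ‖p‖ + dhat μ Q Qd * ‖q‖) +
          (dhat μ Q Qd * ‖p‖ + dhat μ Q Qd * ‖q‖) := by
        gcongr
    _ = 2 * dhat μ Q Qd * ‖u - v‖ := by rw [hpn, hqn]; ring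

lemma qq_mem_density {u : Lp ℝ 1 μ} (hu : u ∈ Density μ) : QQ Q u ∈ Density μ := by
  refine ⟨hQ.nonneg u u hu.1 hu.1, ?_⟩
  show ‖Q u u‖ = 1
  rw [hQ.norm_mul u u hu.1 hu.1, hu.2, one_mul]

lemma qiter_mem_density {u : Lp ℝ 1 μ} (hu : u ∈ Density μ) (n : ℕ) :
    Qiter Q n u ∈ Density μ := by
  induction n with
  | zero => exact hu
  | succ n ih =>
    have : Qiter Q (n + 1) u = QQ Q (Qiter Q n u) := Function.iterate_succ_apply' _ _ _
    rw [this]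
    exact qq_mem_density h hh Qd hQd Q hQ ih

lemma iter_bound (hδ3 : dhat μ Q Qd < 1 / 3) :
    ∀ n : ℕ, ∀ u v : Lp ℝ 1 μ, u ∈ Density μ → v ∈ Density μ →
      ‖Qiter Q (n + 1) u - Qiter Q (n + 1) v‖ ≤ 2 * (3 * dhat μ Q Qd) ^ n := by
  have hδ := dhat_nn h hh Qd hQd Q hQ
  intro n
  induction n with
  | zero =>
    intro u v hu hv
    have hu1 := qiter_mem_density h hh Qd hQd Q hQ hu 1
    have hv1 := qiter_mem_density h hh Qd hQd Q hQ hv 1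
    calc ‖Qiter Q 1 u - Qiter Q 1 v‖ ≤ ‖Qiter Q 1 u‖ + ‖Qiter Q 1 v‖ := norm_sub_le _ _
      _ ≤ 2 * (3 * dhat μ Q Qd) ^ 0 := by rw [hu1.2, hv1.2]; norm_num
  | succ n ih =>
    intro u v hu hv
    have ha := qiter_mem_density h hh Qd hQd Q hQ hu (n + 1)
    have hb := qiter_mem_density h hh Qd hQd Q hQ hv (n + 1)
    have hstep : ∀ w : Lp ℝ 1 μ, Qiter Q (n + 2) w = QQ Q (Qiter Q (n + 1) w) :=
      fun w => Function.iterate_succ_apply' _ _ _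
    rw [hstep u, hstep v]
    have hcon := contract h hh Qd hQd Q hQ ha hb
    have hih := ih u v hu hv
    have hpow : (0 : ℝ) ≤ (3 * dhat μ Q Qd) ^ n := pow_nonneg (by linarith) n
    calc ‖QQ Q (Qiter Q (n + 1) u) - QQ Q (Qiter Q (n + 1) v)‖
        ≤ 2 * dhat μ Q Qd * ‖Qiter Q (n + 1) u - Qiter Q (n + 1) v‖ := hcon
      _ ≤ 2 * dhat μ Q Qd * (2 * (3 * dhat μ Q Qd) ^ n) := by
          apply mul_le_mul_of_nonneg_left hih (by linarith)
      _ ≤ 2 * (3 * dhat μ Q Qd) ^ (n + 1) := by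
          rw [pow_succ]
          nlinarith [mul_nonneg hδ hpow]

lemma mixing_of_close (hδ3 : dhat μ Q Qd < 1 / 3) : NormMixing μ Q := by
  have hδ := dhat_nn h hh Qd hQd Q hQ
  have bound := iter_bound h hh Qd hQd Q hQ hδ3
  set δ := dhat μ Q Qd with hδdef
  have hQh : QQ Q h ∈ Density μ := qq_mem_density h hh Qd hQd Q hQ hh
  set s : ℕ → Lp ℝ 1 μ := fun n => Qiter Q (n + 1) h with hs_def
  have hs : ∀ n, s n ∈ Density μ := fun n => qiter_mem_density h hh Qd hQd Q hQ hh (n + 1)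
  have hdist : ∀ n, dist (s n) (s (n + 1)) ≤ 2 * (3 * δ) ^ n := by
    intro n
    rw [dist_eq_norm]
    have hshift : s (n + 1) = Qiter Q (n + 1) (QQ Q h) := by
      show (QQ Q)^[n + 1 + 1] h = (QQ Q)^[n + 1] (QQ Q h)
      rw [Function.iterate_succ_apply]
    rw [hshift]
    exact bound n h (QQ Q h) hh hQh
  have hr : 3 * δ < 1 := by linarith
  have hcau : CauchySeq s := cauchySeq_of_le_geometric (3 * δ) 2 hr hdist
  obtain ⟨f, hf⟩ := cauchySeq_tendsto_of_complete hcau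
  have hfnn : 0 ≤ f :=
    isClosed_nonneg.mem_of_tendsto hf (Filter.Eventually.of_forall fun n => (hs n).1)
  have hfnorm : ‖f‖ = 1 := by
    have h1 : Filter.Tendsto (fun n => ‖s n‖) Filter.atTop (nhds ‖f‖) := hf.norm
    have h2 : (fun n => ‖s n‖) = fun _ => (1 : ℝ) := funext fun n => (hs n).2
    rw [h2] at h1
    exact (tendsto_nhds_unique h1 tendsto_const_nhds).symm ▸ rfl
  refine ⟨f, ⟨hfnn, hfnorm⟩, ?_⟩
  have hb : Filter.Tendsto (fun k => 2 * (3 * δ) ^ k + ‖s k - f‖) Filter.atTop (nhds 0) := by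
    have g1 : Filter.Tendsto (fun k : ℕ => 2 * (3 * δ) ^ k) Filter.atTop (nhds 0) := by
      have := (tendsto_pow_atTop_nhds_zero_of_lt_one (by linarith : (0:ℝ) ≤ 3 * δ) hr).const_mul
        (2 : ℝ)
      simpa using this
    have g2 : Filter.Tendsto (fun k => ‖s k - f‖) Filter.atTop (nhds 0) := by
      have := tendsto_iff_dist_tendsto_zero.mp hf
      simpa [dist_eq_norm] using this
    simpa using g1.add g2
  have hcomp : Filter.Tendsto (fun n : ℕ => 2 * (3 * δ) ^ (n - 1) + ‖s (n - 1) - f‖)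
      Filter.atTop (nhds 0) := hb.comp (tendsto_sub_atTop_nat 1)
  refine squeeze_zero'
    (Filter.Eventually.of_forall fun n => Real.iSup_nonneg fun g => norm_nonneg _) ?_ hcomp
  filter_upwards [Filter.eventually_ge_atTop 1] with n hn
  obtain ⟨m, rfl⟩ : ∃ m, n = m + 1 := ⟨n - 1, (Nat.succ_pred_eq_of_pos hn).symm⟩
  simp only [Nat.add_sub_cancel]
  refine Real.iSup_le (fun g => ?_) (by positivity)
  have hshm : s m = Qiter Q (m + 1) h := rfl
  calc ‖Qiter Q (m + 1) g.1 - f‖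
      ≤ ‖Qiter Q (m + 1) g.1 - s m‖ + ‖s m - f‖ := by
        have := norm_add_le (Qiter Q (m + 1) g.1 - s m) (s m - f)
        simpa [sub_add_sub_cancel] using this
    _ ≤ 2 * (3 * δ) ^ m + ‖s m - f‖ := by
        gcongr
        rw [hshm]
        exact bound m g.1 h g.2 hh

end Aux


/-- Fix `h ∈ 𝒟`, let `Q⋄(f,g) = (∫ f dμ)(∫ g dμ)·h`, and let `Q` be a QSO
with `d̂_u(Q,Q⋄) = ε < 1/3`. Then `sup_{u,v∈𝒟} ‖ℚⁿ(u) − ℚⁿ(v)‖₁ ≤ 2·(3ε)^{n−1}` for all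
`n ≥ 1` and `Q` is norm mixing; consequently the open `d̂_u`-ball of radius `1/3` about
`Q⋄` consists of norm mixing quadratic stochastic operators. -/
theorem ball_around_Qdiamond_normMixing {X : Type*} [MeasurableSpace X]
    (μ : Measure X) [SigmaFinite μ]
    (h : Lp ℝ 1 μ) (hh : h ∈ Density μ)
    (Qd : Lp ℝ 1 μ → Lp ℝ 1 μ → Lp ℝ 1 μ)
    (hQd : ∀ f g : Lp ℝ 1 μ, Qd f g = ((∫ a, f a ∂μ) * ∫ a, g a ∂μ) • h)
    (Q : Lp ℝ 1 μ → Lp ℝ 1 μ → Lp ℝ 1 μ) (hQ : IsQSO μ Q)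
    (ε : ℝ) (hε : dhat μ Q Qd = ε) (hε3 : ε < 1 / 3) :
    (∀ n : ℕ, 1 ≤ n →
      (⨆ u : Density μ, ⨆ v : Density μ, ‖Qiter Q n u - Qiter Q n v‖)
        ≤ 2 * (3 * ε) ^ (n - 1)) ∧
    NormMixing μ Q ∧
    (∀ Q' : Lp ℝ 1 μ → Lp ℝ 1 μ → Lp ℝ 1 μ, IsQSO μ Q' →
      dhat μ Q' Qd < 1 / 3 → NormMixing μ Q') := by
  have hlt : dhat μ Q Qd < 1 / 3 := by rw [hε]; exact hε3
  have hδ : 0 ≤ ε := hε ▸ dhat_nn h hh Qd hQd Q hQ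
  refine ⟨?_, mixing_of_close h hh Qd hQd Q hQ hlt, fun Q' hQ' hlt' =>
    mixing_of_close h hh Qd hQd Q' hQ' hlt'⟩
  intro n hn
  obtain ⟨m, rfl⟩ : ∃ m, n = m + 1 := ⟨n - 1, (Nat.succ_pred_eq_of_pos hn).symm⟩
  simp only [Nat.add_sub_cancel]
  have hbd := iter_bound h hh Qd hQd Q hQ hlt m
  rw [hε] at hbd
  have hnn : (0:ℝ) ≤ 2 * (3 * ε) ^ m := by positivity
  exact Real.iSup_le (fun u => Real.iSup_le (fun v => hbd u.1 v.1 u.2 v.2) hnn) hnn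
end

section
/- The interior of the set 𝔔_nm of norm mixing quadratic stochastic operators, with respect to the topology induced by the metric d_u (equivalently d̂_u), is nonempty. -/
open MeasureTheory Filter Topology

section AuxLemmas

open MeasureTheory Filter Topology

variable {X : Type*} [MeasurableSpace X] {μ : Measure X}

lemma aux_integrable (f : Lp ℝ 1 μ) : Integrable f μ := L1.integrable_coeFn f

lemma aux_norm_eq_int {f : Lp ℝ 1 μ} (hf : 0 ≤ f) : ‖f‖ = ∫ x, f x ∂μ := by
  rw [L1.norm_eq_integral_norm]
  refine integral_congr_ae ?_
  filter_upwards [(Lp.coeFn_nonneg f).2 hf] with x hx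
  exact Real.norm_of_nonneg hx

lemma aux_int_add (f g : Lp ℝ 1 μ) :
    ∫ x, (f + g) x ∂μ = (∫ x, f x ∂μ) + ∫ x, g x ∂μ := by
  rw [integral_congr_ae (Lp.coeFn_add f g)]
  exact integral_add (aux_integrable f) (aux_integrable g)

lemma aux_int_sub (f g : Lp ℝ 1 μ) :
    ∫ x, (f - g) x ∂μ = (∫ x, f x ∂μ) - ∫ x, g x ∂μ := by
  rw [integral_congr_ae (Lp.coeFn_sub f g)]
  exact integral_sub (aux_integrable f) (aux_integrable g)

lemma aux_int_smul (c : ℝ) (f : Lp ℝ 1 μ) : ∫ x, (c • f) x ∂μ = c * ∫ x, f x ∂μ := by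
  rw [integral_congr_ae (Lp.coeFn_smul c f)]
  simpa using integral_smul c (fun x => f x)

lemma aux_smul_nonneg {c : ℝ} (hc : 0 ≤ c) {f : Lp ℝ 1 μ} (hf : 0 ≤ f) : 0 ≤ c • f := by
  rw [← Lp.coeFn_nonneg]
  filter_upwards [Lp.coeFn_smul c f, (Lp.coeFn_nonneg f).2 hf] with x hx h2
  rw [hx]; exact mul_nonneg hc h2

lemma aux_int_nonneg {f : Lp ℝ 1 μ} (hf : 0 ≤ f) : 0 ≤ ∫ x, f x ∂μ :=
  integral_nonneg_of_ae ((Lp.coeFn_nonneg f).2 hf)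

/-- `Q f 0 = 0` for a QSO. -/
lemma IsQSO.zero_right {Q : Lp ℝ 1 μ → Lp ℝ 1 μ → Lp ℝ 1 μ} (hQ : IsQSO μ Q)
    (f : Lp ℝ 1 μ) : Q f 0 = 0 := by
  have h := hQ.smul_right 0 f 0
  simpa using h

/-- `Q f (g - g') = Q f g - Q f g'` for a QSO. -/
lemma IsQSO.sub_right {Q : Lp ℝ 1 μ → Lp ℝ 1 μ → Lp ℝ 1 μ} (hQ : IsQSO μ Q)
    (f g g' : Lp ℝ 1 μ) : Q f (g - g') = Q f g - Q f g' := by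
  have h := hQ.add_right f g' (g - g')
  rw [add_sub_cancel] at h
  rw [h]; abel

/-- A QSO maps densities to densities. -/
lemma IsQSO.qq_mem {Q : Lp ℝ 1 μ → Lp ℝ 1 μ → Lp ℝ 1 μ} (hQ : IsQSO μ Q)
    {g : Lp ℝ 1 μ} (hg : g ∈ Density μ) : Q g g ∈ Density μ :=
  ⟨hQ.nonneg _ _ hg.1 hg.1, by rw [hQ.norm_mul _ _ hg.1 hg.1, hg.2]; ring⟩

lemma IsQSO.qiter_mem {Q : Lp ℝ 1 μ → Lp ℝ 1 μ → Lp ℝ 1 μ} (hQ : IsQSO μ Q)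
    (n : ℕ) {g : Lp ℝ 1 μ} (hg : g ∈ Density μ) : Qiter Q n g ∈ Density μ := by
  induction n with
  | zero => exact hg
  | succ n ih =>
      rw [Qiter, Function.iterate_succ_apply']
      exact hQ.qq_mem ih

/-- The midpoint of two densities is a density. -/
lemma aux_mid_mem {u v : Lp ℝ 1 μ} (hu : u ∈ Density μ) (hv : v ∈ Density μ) :
    (2⁻¹ : ℝ) • (u + v) ∈ Density μ := by
  constructor
  · exact aux_smul_nonneg (by norm_num) (add_nonneg hu.1 hv.1)
  · rw [norm_smul]
    have : ‖u + v‖ = 2 := by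
      rw [aux_norm_eq_int (add_nonneg hu.1 hv.1), aux_int_add,
        ← aux_norm_eq_int hu.1, ← aux_norm_eq_int hv.1, hu.2, hv.2]
      norm_num
    rw [this]; norm_num

/-- Polarization bound: closeness on the diagonal controls closeness everywhere
(on densities). -/
lemma aux_polar {Q Q' : Lp ℝ 1 μ → Lp ℝ 1 μ → Lp ℝ 1 μ}
    (hQ : IsQSO μ Q) (hQ' : IsQSO μ Q') {δ : ℝ}
    (hδ : ∀ f ∈ Density μ, ‖Q f f - Q' f f‖ ≤ δ)
    {u v : Lp ℝ 1 μ} (hu : u ∈ Density μ) (hv : v ∈ Density μ) :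
    ‖Q u v - Q' u v‖ ≤ 3 * δ := by
  set w : Lp ℝ 1 μ := (2⁻¹ : ℝ) • (u + v) with hw
  have hwD : w ∈ Density μ := aux_mid_mem hu hv
  have expand : ∀ (R : Lp ℝ 1 μ → Lp ℝ 1 μ → Lp ℝ 1 μ), IsQSO μ R →
      R w w = (4⁻¹ : ℝ) • (R u u + R u v + R u v + R v v) := by
    intro R hR
    rw [hw, hR.smul_left, hR.smul_right, hR.add_left, hR.add_right, hR.add_right,
      hR.symm v u, smul_smul]
    norm_num
    module
  have key : Q u v - Q' u v =
      (2 : ℝ) • (Q w w - Q' w w) - (2⁻¹ : ℝ) • (Q u u - Q' u u)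
        - (2⁻¹ : ℝ) • (Q v v - Q' v v) := by
    rw [expand Q hQ, expand Q' hQ']
    module
  rw [key]
  have h1 := hδ w hwD
  have h2 := hδ u hu
  have h3 := hδ v hv
  calc ‖(2:ℝ) • (Q w w - Q' w w) - (2⁻¹:ℝ) • (Q u u - Q' u u)
        - (2⁻¹:ℝ) • (Q v v - Q' v v)‖
      ≤ ‖(2:ℝ) • (Q w w - Q' w w) - (2⁻¹:ℝ) • (Q u u - Q' u u)‖
          + ‖(2⁻¹:ℝ) • (Q v v - Q' v v)‖ := norm_sub_le _ _
    _ ≤ ‖(2:ℝ) • (Q w w - Q' w w)‖ + ‖(2⁻¹:ℝ) • (Q u u - Q' u u)‖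
          + ‖(2⁻¹:ℝ) • (Q v v - Q' v v)‖ := by
        gcongr; exact norm_sub_le _ _
    _ ≤ 2 * δ + 2⁻¹ * δ + 2⁻¹ * δ := by
        rw [norm_smul, norm_smul, norm_smul]
        simp only [Real.norm_ofNat, norm_inv, Real.norm_ofNat]
        gcongr <;> simp [h1, h2, h3]
    _ = 3 * δ := by ring

end AuxLemmas

section AuxContraction

open MeasureTheory Filter Topology

variable {X : Type*} [MeasurableSpace X] {μ : Measure X}

/-- Scaled polarization bound for a nonnegative second argument. -/
lemma aux_scaled {Q Q' : Lp ℝ 1 μ → Lp ℝ 1 μ → Lp ℝ 1 μ}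
    (hQ : IsQSO μ Q) (hQ' : IsQSO μ Q') {δ : ℝ} (hδ0 : 0 ≤ δ)
    (hδ : ∀ f ∈ Density μ, ‖Q f f - Q' f f‖ ≤ δ)
    {g h v : Lp ℝ 1 μ} (hg : g ∈ Density μ) (hh : h ∈ Density μ) (hv : 0 ≤ v) :
    ‖Q (g + h) v - Q' (g + h) v‖ ≤ 6 * δ * ‖v‖ := by
  by_cases h0 : v = 0
  · simp [h0, hQ.zero_right, hQ'.zero_right]
  · have hvn : (0:ℝ) < ‖v‖ := norm_pos_iff.2 h0
    set vh : Lp ℝ 1 μ := (‖v‖⁻¹ : ℝ) • v with hvh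
    have hvhD : vh ∈ Density μ := by
      refine ⟨aux_smul_nonneg (by positivity) hv, ?_⟩
      rw [norm_smul, norm_inv, norm_norm, inv_mul_cancel₀ hvn.ne']
    set w : Lp ℝ 1 μ := (2⁻¹ : ℝ) • (g + h) with hw
    have hwD : w ∈ Density μ := aux_mid_mem hg hh
    have hgh : g + h = (2:ℝ) • w := by rw [hw, smul_smul]; norm_num
    have hvv : v = (‖v‖ : ℝ) • vh := by
      rw [hvh, smul_smul, mul_inv_cancel₀ hvn.ne', one_smul]
    have key : Q (g + h) v - Q' (g + h) v
        = (2 * ‖v‖ : ℝ) • (Q w vh - Q' w vh) := by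
      conv_lhs => rw [hgh, hvv]
      rw [hQ.smul_left, hQ.smul_right, hQ'.smul_left, hQ'.smul_right]
      rw [smul_smul, smul_sub, smul_smul]
    rw [key, norm_smul]
    have := aux_polar hQ hQ' hδ hwD hvhD
    have habs : ‖(2 * ‖v‖ : ℝ)‖ = 2 * ‖v‖ := by
      rw [Real.norm_eq_abs, abs_of_nonneg (by positivity)]
    rw [habs]
    calc 2 * ‖v‖ * ‖Q w vh - Q' w vh‖ ≤ 2 * ‖v‖ * (3 * δ) := by gcongr
      _ = 6 * δ * ‖v‖ := by ring

/-- The contraction estimate for a QSO `Q'` close to a "null-difference" QSO `Q`. -/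
lemma aux_contract {Q Q' : Lp ℝ 1 μ → Lp ℝ 1 μ → Lp ℝ 1 μ}
    (hQ : IsQSO μ Q) (hQ' : IsQSO μ Q') {δ : ℝ} (hδ0 : 0 ≤ δ)
    (hδ : ∀ f ∈ Density μ, ‖Q f f - Q' f f‖ ≤ δ)
    (hnull : ∀ g h : Lp ℝ 1 μ, g ∈ Density μ → h ∈ Density μ → Q (g + h) (g - h) = 0)
    {g h : Lp ℝ 1 μ} (hg : g ∈ Density μ) (hh : h ∈ Density μ) :
    ‖Q' g g - Q' h h‖ ≤ 12 * δ * ‖g - h‖ := by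
  have step1 : Q' g g - Q' h h = Q' (g + h) (g - h) := by
    rw [hQ'.add_left, hQ'.sub_right, hQ'.sub_right, hQ'.symm h g]
    abel
  set p := (g - h)⁺ with hpdef
  set m := (g - h)⁻ with hmdef
  have hd : g - h = p - m := (posPart_sub_negPart _).symm
  have step2 : Q' g g - Q' h h
      = (Q' (g + h) p - Q (g + h) p) - (Q' (g + h) m - Q (g + h) m) := by
    have h1 : Q (g + h) p - Q (g + h) m = 0 := by
      rw [← hQ.sub_right, ← hd, hnull g h hg hh]
    rw [step1]
    conv_lhs => rw [hd]
    rw [hQ'.sub_right]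
    conv_rhs => rw [sub_sub_sub_comm, h1, sub_zero]
  have hp : ‖p‖ ≤ ‖g - h‖ := norm_le_norm_of_abs_le_abs (by
    rw [abs_of_nonneg (posPart_nonneg _), ← posPart_add_negPart (g - h)]
    exact le_add_of_nonneg_right (negPart_nonneg _))
  have hm : ‖m‖ ≤ ‖g - h‖ := norm_le_norm_of_abs_le_abs (by
    rw [abs_of_nonneg (negPart_nonneg _), ← posPart_add_negPart (g - h)]
    exact le_add_of_nonneg_left (posPart_nonneg _))
  have b1 := aux_scaled hQ hQ' hδ0 hδ hg hh (posPart_nonneg (g - h))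
  have b2 := aux_scaled hQ hQ' hδ0 hδ hg hh (negPart_nonneg (g - h))
  rw [step2]
  calc ‖_ - _‖ ≤ ‖Q' (g + h) p - Q (g + h) p‖
        + ‖Q' (g + h) m - Q (g + h) m‖ := norm_sub_le _ _
    _ ≤ 6 * δ * ‖p‖ + 6 * δ * ‖m‖ := by
        rw [norm_sub_rev, norm_sub_rev (Q' (g + h) m)]
        exact add_le_add b1 b2
    _ ≤ 6 * δ * ‖g - h‖ + 6 * δ * ‖g - h‖ := by gcongr
    _ = 12 * δ * ‖g - h‖ := by ring

end AuxContraction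

/-- The interior of the set `𝔔_nm` of norm mixing quadratic stochastic
operators, in the topology induced by the metric `d_u`, is nonempty: there is a norm mixing
QSO `Q` together with `ε > 0` such that every QSO within `d_u`-distance `ε` of `Q` is norm
mixing. (The trivial case where no density exists is excluded.) -/
theorem interior_normMixing_nonempty {X : Type*} [MeasurableSpace X]
    (μ : Measure X) [SigmaFinite μ] (hD : (Density μ).Nonempty) :
    ∃ Q : Lp ℝ 1 μ → Lp ℝ 1 μ → Lp ℝ 1 μ, IsQSO μ Q ∧ NormMixing μ Q ∧
      ∃ ε > (0 : ℝ), ∀ Q' : Lp ℝ 1 μ → Lp ℝ 1 μ → Lp ℝ 1 μ,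
        IsQSO μ Q' → du μ Q Q' < ε → NormMixing μ Q' := by
  classical
  obtain ⟨f₀, hf₀⟩ := hD
  haveI : Nonempty (Density μ) := ⟨⟨f₀, hf₀⟩⟩
  -- the model QSO
  set Q : Lp ℝ 1 μ → Lp ℝ 1 μ → Lp ℝ 1 μ :=
    fun f g => ((∫ x, f x ∂μ) * (∫ x, g x ∂μ)) • f₀ with hQdef
  have hint_one : ∀ f ∈ Density μ, ∫ x, f x ∂μ = 1 := by
    intro f hf
    rw [← aux_norm_eq_int hf.1, hf.2]
  have hQ : IsQSO μ Q := by
    constructor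
    · intro f f' g; rw [hQdef]; simp only [aux_int_add, add_mul, add_smul]
    · intro c f g; rw [hQdef]; simp only [aux_int_smul, smul_smul]; ring_nf
    · intro f g g'; rw [hQdef]; simp only [aux_int_add, mul_add, add_smul]
    · intro c f g; rw [hQdef]; simp only [aux_int_smul, smul_smul]; ring_nf
    · intro f g hf hg
      exact aux_smul_nonneg (mul_nonneg (aux_int_nonneg hf) (aux_int_nonneg hg)) hf₀.1
    · intro f g; rw [hQdef]; simp only [mul_comm]
    · intro f g hf hg
      rw [hQdef]; simp only
      rw [norm_smul, hf₀.2, mul_one, Real.norm_eq_abs,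
        abs_of_nonneg (mul_nonneg (aux_int_nonneg hf) (aux_int_nonneg hg)),
        aux_norm_eq_int hf, aux_norm_eq_int hg]
  -- QQ Q sends every density to f₀
  have hQQ : ∀ g ∈ Density μ, QQ Q g = f₀ := by
    intro g hg
    rw [QQ, hQdef]; simp only [hint_one g hg, one_mul, one_smul]
  have hiterQ : ∀ n : ℕ, ∀ g ∈ Density μ, Qiter Q (n + 1) g = f₀ := by
    intro n
    induction n with
    | zero => intro g hg; rw [Qiter, Function.iterate_one]; exact hQQ g hg
    | succ n ih =>
        intro g hg
        rw [Qiter, Function.iterate_succ_apply]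
        exact ih _ (hQ.qq_mem hg)
  have hmixQ : NormMixing μ Q := by
    refine ⟨f₀, hf₀, ?_⟩
    have hconst : ∀ n ≥ 1, (⨆ g : Density μ, ‖Qiter Q n g - f₀‖) = 0 := by
      intro n hn
      obtain ⟨k, rfl⟩ := Nat.exists_eq_add_of_le hn
      have : ∀ g : Density μ, ‖Qiter Q (1 + k) g - f₀‖ = 0 := by
        intro g
        rw [add_comm, hiterQ k g g.2, sub_self, norm_zero]
      simp only [this, ciSup_const]
    exact tendsto_atTop_of_eventually_const hconst
  refine ⟨Q, hQ, hmixQ, 48⁻¹, by norm_num, ?_⟩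
  intro Q' hQ' hdu
  -- the sup bound on the diagonal
  set δ := du μ Q Q' with hδdef
  have hbdd : BddAbove (Set.range fun f : Density μ => ‖Q f f - Q' f f‖) := by
    refine ⟨2, ?_⟩
    rintro x ⟨f, rfl⟩
    calc ‖Q f f - Q' f f‖ ≤ ‖Q (f:Lp ℝ 1 μ) f‖ + ‖Q' (f:Lp ℝ 1 μ) f‖ := norm_sub_le _ _
      _ ≤ 2 := by
          rw [hQ.norm_mul _ _ f.2.1 f.2.1, hQ'.norm_mul _ _ f.2.1 f.2.1, f.2.2]
          norm_num
  have hδf : ∀ f ∈ Density μ, ‖Q f f - Q' f f‖ ≤ δ := by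
    intro f hf
    exact le_ciSup hbdd ⟨f, hf⟩
  have hδ0 : 0 ≤ δ := le_trans (norm_nonneg _) (hδf f₀ hf₀)
  have hδlt : δ < 48⁻¹ := hdu
  -- Q kills differences of densities
  have hnull : ∀ g h : Lp ℝ 1 μ, g ∈ Density μ → h ∈ Density μ →
      Q (g + h) (g - h) = 0 := by
    intro g h hg hh
    rw [hQdef]; simp only [aux_int_sub, hint_one g hg, hint_one h hh, sub_self,
      mul_zero, zero_smul]
  -- contraction with constant 1/2
  have hcontr : ∀ g h : Lp ℝ 1 μ, g ∈ Density μ → h ∈ Density μ →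
      ‖QQ Q' g - QQ Q' h‖ ≤ 2⁻¹ * ‖g - h‖ := by
    intro g h hg hh
    calc ‖QQ Q' g - QQ Q' h‖ ≤ 12 * δ * ‖g - h‖ :=
          aux_contract hQ hQ' hδ0 hδf hnull hg hh
      _ ≤ 2⁻¹ * ‖g - h‖ := by
          apply mul_le_mul_of_nonneg_right _ (norm_nonneg _)
          linarith
  have hiter' : ∀ n : ℕ, ∀ g h : Lp ℝ 1 μ, g ∈ Density μ → h ∈ Density μ →
      ‖Qiter Q' n g - Qiter Q' n h‖ ≤ (2⁻¹ : ℝ) ^ n * ‖g - h‖ := by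
    intro n
    induction n with
    | zero => intro g h _ _; simp [Qiter]
    | succ n ih =>
        intro g h hg hh
        have h1 : Qiter Q' (n + 1) g = Qiter Q' n (QQ Q' g) := by
          rw [Qiter, Qiter, Function.iterate_succ_apply]
        have h2 : Qiter Q' (n + 1) h = Qiter Q' n (QQ Q' h) := by
          rw [Qiter, Qiter, Function.iterate_succ_apply]
        rw [h1, h2]
        calc ‖Qiter Q' n (QQ Q' g) - Qiter Q' n (QQ Q' h)‖
            ≤ (2⁻¹:ℝ)^n * ‖QQ Q' g - QQ Q' h‖ :=
              ih _ _ (hQ'.qq_mem hg) (hQ'.qq_mem hh)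
          _ ≤ (2⁻¹:ℝ)^n * (2⁻¹ * ‖g - h‖) := by
              apply mul_le_mul_of_nonneg_left (hcontr g h hg hh) (by positivity)
          _ = (2⁻¹:ℝ)^(n+1) * ‖g - h‖ := by ring
  -- the orbit of f₀ is Cauchy
  set a : ℕ → Lp ℝ 1 μ := fun n => Qiter Q' n f₀ with hadef
  have haD : ∀ n, a n ∈ Density μ := fun n => hQ'.qiter_mem n hf₀
  have hdiam : ∀ u v : Lp ℝ 1 μ, u ∈ Density μ → v ∈ Density μ → ‖u - v‖ ≤ 2 := by
    intro u v hu hv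
    calc ‖u - v‖ ≤ ‖u‖ + ‖v‖ := norm_sub_le _ _
      _ = 2 := by rw [hu.2, hv.2]; norm_num
  have hcauchy : CauchySeq a := by
    apply cauchySeq_of_le_geometric (r := 2⁻¹) (C := 2) (by norm_num)
    intro n
    rw [dist_eq_norm]
    have h1 : a (n + 1) = Qiter Q' n (QQ Q' f₀) := by
      rw [hadef]; simp only; rw [Qiter, Qiter, Function.iterate_succ_apply]
    rw [h1]
    calc ‖Qiter Q' n f₀ - Qiter Q' n (QQ Q' f₀)‖
        ≤ (2⁻¹:ℝ)^n * ‖f₀ - QQ Q' f₀‖ := hiter' n _ _ hf₀ (hQ'.qq_mem hf₀)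
      _ ≤ (2⁻¹:ℝ)^n * 2 := by
          apply mul_le_mul_of_nonneg_left (hdiam _ _ hf₀ (hQ'.qq_mem hf₀)) (by positivity)
      _ = 2 * (2⁻¹:ℝ)^n := by ring
  obtain ⟨l, hl⟩ := cauchySeq_tendsto_of_complete hcauchy
  have hlD : l ∈ Density μ := by
    constructor
    · exact isClosed_nonneg.mem_of_tendsto hl (Filter.Eventually.of_forall fun n => (haD n).1)
    · have h1 : Tendsto (fun n => ‖a n‖) atTop (𝓝 ‖l‖) := (continuous_norm.tendsto l).comp hl
      have h2 : Tendsto (fun n => ‖a n‖) atTop (𝓝 1) := by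
        simp only [fun n => (haD n).2]
        exact tendsto_const_nhds
      exact tendsto_nhds_unique h1 h2
  have he : Tendsto (fun n => ‖a n - l‖) atTop (𝓝 0) := by
    have := (tendsto_sub_nhds_zero_iff.mpr hl).norm
    simpa using this
  refine ⟨l, hlD, ?_⟩
  apply squeeze_zero (g := fun n => 2 * (2⁻¹:ℝ)^n + ‖a n - l‖)
  · intro n
    exact Real.iSup_nonneg fun g => norm_nonneg _
  · intro n
    apply ciSup_le
    intro g
    calc ‖Qiter Q' n g - l‖
        ≤ ‖Qiter Q' n g - a n‖ + ‖a n - l‖ := norm_sub_le_norm_sub_add_norm_sub _ _ _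
      _ ≤ (2⁻¹:ℝ)^n * ‖(g:Lp ℝ 1 μ) - f₀‖ + ‖a n - l‖ := by
          gcongr
          exact hiter' n _ _ g.2 hf₀
      _ ≤ (2⁻¹:ℝ)^n * 2 + ‖a n - l‖ := by
          gcongr
          exact hdiam _ _ g.2 hf₀
      _ = 2 * (2⁻¹:ℝ)^n + ‖a n - l‖ := by ring
  · have h1 : Tendsto (fun n : ℕ => 2 * (2⁻¹:ℝ)^n) atTop (𝓝 0) := by
      have := tendsto_pow_atTop_nhds_zero_of_lt_one (by norm_num : (0:ℝ) ≤ 2⁻¹)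
        (by norm_num : (2⁻¹:ℝ) < 1)
      simpa using this.const_mul 2
    simpa using h1.add he
end

section
/- Let P : L¹ → L¹ be a Markov operator and define the quadratic stochastic operator Q(f,g) := (1/2)((∫_X g dμ)·Pf + (∫_X f dμ)·Pg). Then for all n ≥ 1, sup_{f,g,h∈𝒟} ‖P_f^{[0,n]}(g) − P_f^{[0,n]}(h)‖₁ ≤ 2^{−(n−1)}; in particular Q is norm quasi-mixing. -/
open MeasureTheory Filter Topology

/-- A (linear) Markov operator on `L¹`: linear, positivity preserving and norm preserving
on nonnegative functions. -/
structure IsMarkov {X : Type*} [MeasurableSpace X] (μ : Measure X)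
    (P : Lp ℝ 1 μ → Lp ℝ 1 μ) : Prop where
  map_add : ∀ f g, P (f + g) = P f + P g
  map_smul : ∀ (c : ℝ) f, P (c • f) = c • P f
  nonneg : ∀ f, 0 ≤ f → 0 ≤ P f
  norm_eq : ∀ f, 0 ≤ f → ‖P f‖ = ‖f‖

section Auxiliary

open MeasureTheory

variable {X : Type*} [MeasurableSpace X] {μ : Measure X}

lemma intL_add (f g : Lp ℝ 1 μ) :
    ∫ a, (f + g : Lp ℝ 1 μ) a ∂μ = (∫ a, f a ∂μ) + ∫ a, g a ∂μ := by
  rw [← L1.integral_eq_integral, ← L1.integral_eq_integral, ← L1.integral_eq_integral,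
    L1.integral_add]

lemma intL_smul (c : ℝ) (f : Lp ℝ 1 μ) :
    ∫ a, (c • f : Lp ℝ 1 μ) a ∂μ = c * ∫ a, f a ∂μ := by
  rw [← L1.integral_eq_integral, ← L1.integral_eq_integral, L1.integral_smul, smul_eq_mul]

lemma intL_sub (f g : Lp ℝ 1 μ) :
    ∫ a, (f - g : Lp ℝ 1 μ) a ∂μ = (∫ a, f a ∂μ) - ∫ a, g a ∂μ := by
  have : f - g = f + (-1 : ℝ) • g := by rw [neg_one_smul]; abel
  rw [this, intL_add, intL_smul]; ring

lemma norm_eq_intL (f : Lp ℝ 1 μ) (hf : 0 ≤ f) : ‖f‖ = ∫ a, f a ∂μ := by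
  rw [L1.norm_eq_integral_norm]
  refine integral_congr_ae ?_
  filter_upwards [(Lp.coeFn_nonneg f).2 hf] with a ha
  exact Real.norm_of_nonneg ha

lemma intL_nonneg (f : Lp ℝ 1 μ) (hf : 0 ≤ f) : 0 ≤ ∫ a, f a ∂μ := by
  rw [← norm_eq_intL f hf]; exact norm_nonneg f

lemma smul_nonneg_Lp (c : ℝ) (hc : 0 ≤ c) (f : Lp ℝ 1 μ) (hf : 0 ≤ f) :
    (0 : Lp ℝ 1 μ) ≤ c • f := by
  rw [← Lp.coeFn_nonneg]
  filter_upwards [Lp.coeFn_smul c f, (Lp.coeFn_nonneg f).2 hf] with a ha hfa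
  rw [ha, Pi.smul_apply, smul_eq_mul]
  exact mul_nonneg hc hfa

lemma markov_map_sub {P : Lp ℝ 1 μ → Lp ℝ 1 μ} (hP : IsMarkov μ P) (f g : Lp ℝ 1 μ) :
    P (f - g) = P f - P g := by
  have : f - g = f + (-1 : ℝ) • g := by rw [neg_one_smul]; abel
  rw [this, hP.map_add, hP.map_smul, neg_one_smul]; abel

lemma markov_int (P : Lp ℝ 1 μ → Lp ℝ 1 μ) (hP : IsMarkov μ P) (f : Lp ℝ 1 μ) :
    ∫ a, (P f) a ∂μ = ∫ a, f a ∂μ := by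
  have hdecomp : f⁺ - f⁻ = f := posPart_sub_negPart f
  have hp : (0 : Lp ℝ 1 μ) ≤ f⁺ := posPart_nonneg f
  have hn : (0 : Lp ℝ 1 μ) ≤ f⁻ := negPart_nonneg f
  have key : ∀ g : Lp ℝ 1 μ, 0 ≤ g → ∫ a, (P g) a ∂μ = ∫ a, g a ∂μ := by
    intro g hg
    rw [← norm_eq_intL _ (hP.nonneg g hg), ← norm_eq_intL _ hg, hP.norm_eq g hg]
  calc ∫ a, (P f) a ∂μ = ∫ a, (P (f⁺ - f⁻)) a ∂μ := by rw [hdecomp]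
    _ = ∫ a, (P f⁺ - P f⁻ : Lp ℝ 1 μ) a ∂μ := by rw [markov_map_sub hP]
    _ = (∫ a, (P f⁺) a ∂μ) - ∫ a, (P f⁻) a ∂μ := intL_sub _ _
    _ = (∫ a, (f⁺ : Lp ℝ 1 μ) a ∂μ) - ∫ a, (f⁻ : Lp ℝ 1 μ) a ∂μ := by
        rw [key _ hp, key _ hn]
    _ = ∫ a, (f⁺ - f⁻ : Lp ℝ 1 μ) a ∂μ := (intL_sub _ _).symm
    _ = ∫ a, f a ∂μ := by rw [hdecomp]

lemma markov_contraction (P : Lp ℝ 1 μ → Lp ℝ 1 μ) (hP : IsMarkov μ P) (f : Lp ℝ 1 μ) :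
    ‖P f‖ ≤ ‖f‖ := by
  have hdecomp : f⁺ - f⁻ = f := posPart_sub_negPart f
  have hp : (0 : Lp ℝ 1 μ) ≤ f⁺ := posPart_nonneg f
  have hn : (0 : Lp ℝ 1 μ) ≤ f⁻ := negPart_nonneg f
  have habs : ‖f‖ = ‖f⁺‖ + ‖f⁻‖ := by
    rw [← norm_abs_eq_norm f, ← posPart_add_negPart f,
      norm_eq_intL _ (add_nonneg hp hn), intL_add, norm_eq_intL _ hp, norm_eq_intL _ hn]
  calc ‖P f‖ = ‖P f⁺ - P f⁻‖ := by rw [← markov_map_sub hP, hdecomp]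
    _ ≤ ‖P f⁺‖ + ‖P f⁻‖ := norm_sub_le _ _
    _ = ‖f⁺‖ + ‖f⁻‖ := by rw [hP.norm_eq _ hp, hP.norm_eq _ hn]
    _ = ‖f‖ := habs.symm

end Auxiliary

/-- For a Markov operator `P`, the operator
`Q(f,g) = (1/2)((∫ g dμ)·Pf + (∫ f dμ)·Pg)` is a quadratic stochastic operator satisfying
`sup_{f,g,h∈𝒟} ‖P_f^{[0,n]}(g) − P_f^{[0,n]}(h)‖₁ ≤ 2^{−(n−1)}` for all `n ≥ 1`;
in particular `Q` is norm quasi-mixing. -/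
theorem markov_average_normQuasiMixing {X : Type*} [MeasurableSpace X]
    (μ : Measure X) [SigmaFinite μ]
    (P : Lp ℝ 1 μ → Lp ℝ 1 μ) (hP : IsMarkov μ P)
    (Q : Lp ℝ 1 μ → Lp ℝ 1 μ → Lp ℝ 1 μ)
    (hQ : ∀ f g : Lp ℝ 1 μ,
      Q f g = (1 / 2 : ℝ) • ((∫ a, g a ∂μ) • P f + (∫ a, f a ∂μ) • P g)) :
    IsQSO μ Q ∧
    (∀ n : ℕ, 1 ≤ n → supDiff μ Q n ≤ (1 / 2 : ℝ) ^ (n - 1)) ∧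
    NormQuasiMixing μ Q := by
  
  -- integral of a density is 1
  have hdens_int : ∀ f : Lp ℝ 1 μ, f ∈ Density μ → ∫ a, f a ∂μ = 1 := by
    intro f hf; rw [← norm_eq_intL f hf.1]; exact hf.2
  -- Q is a QSO
  have hnonneg : ∀ f g : Lp ℝ 1 μ, 0 ≤ f → 0 ≤ g → 0 ≤ Q f g := by
    intro f g hf hg
    rw [hQ]
    exact smul_nonneg_Lp _ (by norm_num) _
      (add_nonneg (smul_nonneg_Lp _ (intL_nonneg g hg) _ (hP.nonneg f hf))
        (smul_nonneg_Lp _ (intL_nonneg f hf) _ (hP.nonneg g hg)))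
  have hnorm_mul : ∀ f g : Lp ℝ 1 μ, 0 ≤ f → 0 ≤ g → ‖Q f g‖ = ‖f‖ * ‖g‖ := by
    intro f g hf hg
    rw [norm_eq_intL _ (hnonneg f g hf hg), hQ, intL_smul, intL_add, intL_smul, intL_smul,
      markov_int P hP, markov_int P hP, norm_eq_intL f hf, norm_eq_intL g hg]
    ring
  have hQSO : IsQSO μ Q := by
    refine ⟨?_, ?_, ?_, ?_, hnonneg, ?_, hnorm_mul⟩
    · intro f f' g
      simp only [hQ, hP.map_add, intL_add]
      module
    · intro c f g
      simp only [hQ, hP.map_smul, intL_smul]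
      module
    · intro f g g'
      simp only [hQ, hP.map_add, intL_add]
      module
    · intro c f g
      simp only [hQ, hP.map_smul, intL_smul]
      module
    · intro f g
      rw [hQ, hQ, add_comm]
  -- density preservation
  have hQdens : ∀ f g : Lp ℝ 1 μ, f ∈ Density μ → g ∈ Density μ → Q f g ∈ Density μ := by
    intro f g hf hg
    exact ⟨hnonneg f g hf.1 hg.1, by rw [hnorm_mul f g hf.1 hg.1, hf.2, hg.2, one_mul]⟩
  have hQiter : ∀ n (f : Lp ℝ 1 μ), f ∈ Density μ → Qiter Q n f ∈ Density μ := by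
    intro n
    induction n with
    | zero => intro f hf; simpa [Qiter] using hf
    | succ n ih =>
      intro f hf
      have h1 : Qiter Q (n + 1) f = QQ Q (Qiter Q n f) := by
        simp [Qiter, Function.iterate_succ_apply']
      rw [h1]
      exact hQdens _ _ (ih f hf) (ih f hf)
  have hPchain : ∀ n (f g : Lp ℝ 1 μ), f ∈ Density μ → g ∈ Density μ →
      Pchain Q f n g ∈ Density μ := by
    intro n f g hf hg
    induction n with
    | zero => simpa [Pchain] using hg
    | succ n ih => exact hQdens _ _ (hQiter n f hf) ih
  -- key estimate
  have hkey : ∀ n (f g h : Lp ℝ 1 μ), f ∈ Density μ → g ∈ Density μ → h ∈ Density μ →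
      ‖Pchain Q f n g - Pchain Q f n h‖ ≤ 2 * (1 / 2 : ℝ) ^ n := by
    intro n f g h hf hg hh
    induction n with
    | zero =>
      simp only [Pchain, id_eq, pow_zero, mul_one]
      calc ‖g - h‖ ≤ ‖g‖ + ‖h‖ := norm_sub_le _ _
        _ = 2 := by rw [hg.2, hh.2]; norm_num
    | succ n ih =>
      have hd := hQiter n f hf
      have hG := hPchain n f g hf hg
      have hH := hPchain n f h hf hh
      have hdiff : Pchain Q f (n + 1) g - Pchain Q f (n + 1) h =
          (1 / 2 : ℝ) • P (Pchain Q f n g - Pchain Q f n h) := by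
        show Q (Qiter Q n f) (Pchain Q f n g) - Q (Qiter Q n f) (Pchain Q f n h) = _
        rw [hQ, hQ, hdens_int _ hd, hdens_int _ hG, hdens_int _ hH,
          markov_map_sub hP, ← smul_sub]
        congr 1
        simp only [one_smul]
        abel
      rw [hdiff, norm_smul, Real.norm_eq_abs]
      have hc := markov_contraction P hP (Pchain Q f n g - Pchain Q f n h)
      calc |(1 / 2 : ℝ)| * ‖P (Pchain Q f n g - Pchain Q f n h)‖
          ≤ (1 / 2 : ℝ) * ‖Pchain Q f n g - Pchain Q f n h‖ := by
            rw [abs_of_nonneg (by norm_num : (0:ℝ) ≤ 1/2)]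
            exact mul_le_mul_of_nonneg_left hc (by norm_num)
        _ ≤ (1 / 2 : ℝ) * (2 * (1 / 2 : ℝ) ^ n) :=
            mul_le_mul_of_nonneg_left ih (by norm_num)
        _ = 2 * (1 / 2 : ℝ) ^ (n + 1) := by ring
  have hsup : ∀ n, supDiff μ Q n ≤ 2 * (1 / 2 : ℝ) ^ n := by
    intro n
    refine Real.iSup_le (fun f => Real.iSup_le (fun g => Real.iSup_le
      (fun h => hkey n f g h f.2 g.2 h.2) (by positivity)) (by positivity)) (by positivity)
  refine ⟨hQSO, ?_, ?_⟩
  · intro n hn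
    refine (hsup n).trans_eq ?_
    obtain ⟨m, rfl⟩ := Nat.exists_eq_add_of_le hn
    simp only [Nat.add_sub_cancel_left, pow_add, pow_one]
    ring
  · have hnn : ∀ n, 0 ≤ supDiff μ Q n := fun n =>
      Real.iSup_nonneg fun f => Real.iSup_nonneg fun g => Real.iSup_nonneg fun h =>
        norm_nonneg _
    have hten : Tendsto (fun n => 2 * (1 / 2 : ℝ) ^ n) atTop (𝓝 0) := by
      simpa using (tendsto_pow_atTop_nhds_zero_of_lt_one (r := (1/2 : ℝ)) (by norm_num) (by norm_num)).const_mul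
        (2 : ℝ)
    exact squeeze_zero hnn hsup hten
end

section
/- The set 𝔔_nqm of norm quasi-mixing quadratic stochastic operators is a dense and open subset of the set 𝔔 of all quadratic stochastic operators for the topology induced by the metric d_u(Q₁,Q₂) := sup_{f∈𝒟} ‖ℚ₁(f) − ℚ₂(f)‖₁. -/
/-!
Density: mix `Q` with weight `δ` with the QSO `(f, g) ↦ (∫ f) (∫ g) h₀` for a fixed density `h₀`.
This moves `Q` by at most `2δ` for `d_u`, and since the constant part kills functions of integral
zero, every step of the chain of the mixture contracts differences of densities by `1 - δ`.

Openness: `s_Q(n) = sup ‖P_f^{[0,n]} g - P_f^{[0,n]} h‖` is submultiplicative, because a function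
`w` of integral zero is `‖w⁺‖` times a difference of two densities. So `Q` is norm quasi-mixing
as soon as `s_Q(N) < 1` for a single `N`. For fixed `N` the quantity `s_Q(N)` is `d_u`-continuous
in `Q`: by polarization `‖Q(f,g) - Q'(f,g)‖ ≤ 3 d_u(Q,Q')` on densities, and induction along the
chain gives `s_{Q'}(N) ≤ s_Q(N) + 2·5^N d_u(Q,Q')`.
-/

open MeasureTheory Filter Topology

namespace MeasureTheory

variable {X : Type*} [MeasurableSpace X] {μ : Measure X}

instance Lp.instPosSMulMono {p : ENNReal} : PosSMulMono ℝ (Lp ℝ p μ) :=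
  .of_smul_nonneg fun c hc f hf => (Lp.coeFn_nonneg _).1 <| by
    filter_upwards [Lp.coeFn_smul c f, (Lp.coeFn_nonneg f).2 hf] with x hcf hfx
    rw [hcf]
    exact mul_nonneg hc hfx

namespace L1

theorem integral_eq_norm_of_nonneg {f : Lp ℝ 1 μ} (hf : 0 ≤ f) : L1.integral f = ‖f‖ := by
  rw [L1.integral_eq_integral, L1.norm_eq_integral_norm]
  refine integral_congr_ae ?_
  filter_upwards [(Lp.coeFn_nonneg f).2 hf] with x hx
  exact (Real.norm_of_nonneg hx).symm

theorem norm_add_of_nonneg {f g : Lp ℝ 1 μ} (hf : 0 ≤ f) (hg : 0 ≤ g) :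
    ‖f + g‖ = ‖f‖ + ‖g‖ := by
  rw [← integral_eq_norm_of_nonneg (add_nonneg hf hg), L1.integral_add,
    integral_eq_norm_of_nonneg hf, integral_eq_norm_of_nonneg hg]

theorem norm_posPart_add_norm_negPart (w : Lp ℝ 1 μ) : ‖w⁺‖ + ‖w⁻‖ = ‖w‖ := by
  rw [← norm_add_of_nonneg (posPart_nonneg w) (negPart_nonneg w), posPart_add_negPart,
    norm_abs_eq_norm]

theorem norm_posPart_le (w : Lp ℝ 1 μ) : ‖w⁺‖ ≤ ‖w‖ := by
  linarith [norm_posPart_add_norm_negPart w, norm_nonneg w⁻]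

theorem norm_posPart_eq_norm_negPart {w : Lp ℝ 1 μ} (hw : L1.integral w = 0) :
    ‖w⁺‖ = ‖w⁻‖ := by
  rwa [← posPart_sub_negPart w, L1.integral_sub, integral_eq_norm_of_nonneg (posPart_nonneg w),
    integral_eq_norm_of_nonneg (negPart_nonneg w), sub_eq_zero] at hw

end L1

end MeasureTheory

section

variable {X : Type*} [MeasurableSpace X] {μ : Measure X} {Q Q' : Lp ℝ 1 μ → Lp ℝ 1 μ → Lp ℝ 1 μ}

theorem integral_eq_one_of_mem_density {f : Lp ℝ 1 μ} (hf : f ∈ Density μ) :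
    L1.integral f = 1 := by
  rw [L1.integral_eq_norm_of_nonneg hf.1, hf.2]

theorem integral_sub_eq_zero_of_mem_density {f g : Lp ℝ 1 μ} (hf : f ∈ Density μ)
    (hg : g ∈ Density μ) : L1.integral (f - g) = 0 := by
  rw [L1.integral_sub, integral_eq_one_of_mem_density hf, integral_eq_one_of_mem_density hg,
    sub_self]

theorem exists_mem_density_eq_norm_smul {f g : Lp ℝ 1 μ} (hf : f ∈ Density μ) (hg : 0 ≤ g) :
    ∃ d ∈ Density μ, g = ‖g‖ • d := by
  rcases eq_or_ne g 0 with rfl | hg0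
  · exact ⟨f, hf, by rw [norm_zero, zero_smul]⟩
  have hnorm : ‖g‖ ≠ 0 := norm_ne_zero_iff.2 hg0
  refine ⟨‖g‖⁻¹ • g, ⟨smul_nonneg (by positivity) hg, ?_⟩, (smul_inv_smul₀ hnorm g).symm⟩
  rw [norm_smul, norm_inv, norm_norm, inv_mul_cancel₀ hnorm]

theorem midpoint_mem_density {f g : Lp ℝ 1 μ} (hf : f ∈ Density μ) (hg : g ∈ Density μ) :
    (2⁻¹ : ℝ) • (f + g) ∈ Density μ := by
  refine ⟨smul_nonneg (by norm_num) (add_nonneg hf.1 hg.1), ?_⟩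
  rw [norm_smul, L1.norm_add_of_nonneg hf.1 hg.1, hf.2, hg.2]
  norm_num

theorem qiter_succ_apply (n : ℕ) (f : Lp ℝ 1 μ) :
    Qiter Q (n + 1) f = Q (Qiter Q n f) (Qiter Q n f) :=
  Function.iterate_succ_apply' _ n f

theorem qiter_add (m n : ℕ) (f : Lp ℝ 1 μ) :
    Qiter Q (m + n) f = Qiter Q m (Qiter Q n f) :=
  Function.iterate_add_apply _ m n f

theorem pchain_succ (f g : Lp ℝ 1 μ) (n : ℕ) :
    Pchain Q f (n + 1) g = Q (Qiter Q n f) (Pchain Q f n g) :=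
  rfl

theorem pchain_add (f g : Lp ℝ 1 μ) (n m : ℕ) :
    Pchain Q f (n + m) g = Pchain Q (Qiter Q n f) m (Pchain Q f n g) := by
  induction m with
  | zero => rfl
  | succ m ih =>
    rw [← Nat.add_assoc, pchain_succ, pchain_succ, ih, add_comm, qiter_add]

namespace IsQSO

theorem sub_right_s11 (hQ : IsQSO μ Q) (f g h : Lp ℝ 1 μ) : Q f (g - h) = Q f g - Q f h := by
  rw [eq_sub_iff_add_eq, ← hQ.add_right, sub_add_cancel]

theorem norm_apply_le (hQ : IsQSO μ Q) {u : Lp ℝ 1 μ} (hu : 0 ≤ u) (w : Lp ℝ 1 μ) :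
    ‖Q u w‖ ≤ ‖u‖ * ‖w‖ :=
  calc ‖Q u w‖ = ‖Q u w⁺ - Q u w⁻‖ := by rw [← hQ.sub_right_s11, posPart_sub_negPart]
    _ ≤ ‖Q u w⁺‖ + ‖Q u w⁻‖ := norm_sub_le _ _
    _ = ‖u‖ * ‖w‖ := by
      rw [hQ.norm_mul u _ hu (posPart_nonneg w), hQ.norm_mul u _ hu (negPart_nonneg w), ← mul_add,
        L1.norm_posPart_add_norm_negPart]

theorem norm_apply_le_of_mem_density (hQ : IsQSO μ Q) {u : Lp ℝ 1 μ} (hu : u ∈ Density μ)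
    (w : Lp ℝ 1 μ) : ‖Q u w‖ ≤ ‖w‖ := by
  simpa [hu.2] using hQ.norm_apply_le hu.1 w

theorem apply_mem_density (hQ : IsQSO μ Q) {f g : Lp ℝ 1 μ} (hf : f ∈ Density μ)
    (hg : g ∈ Density μ) : Q f g ∈ Density μ :=
  ⟨hQ.nonneg f g hf.1 hg.1, by rw [hQ.norm_mul f g hf.1 hg.1, hf.2, hg.2, one_mul]⟩

theorem qiter_mem_density (hQ : IsQSO μ Q) {f : Lp ℝ 1 μ} (hf : f ∈ Density μ) (n : ℕ) :
    Qiter Q n f ∈ Density μ := by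
  induction n with
  | zero => exact hf
  | succ n ih =>
    rw [qiter_succ_apply]
    exact hQ.apply_mem_density ih ih

theorem pchain_mem_density (hQ : IsQSO μ Q) {f g : Lp ℝ 1 μ} (hf : f ∈ Density μ)
    (hg : g ∈ Density μ) (n : ℕ) : Pchain Q f n g ∈ Density μ := by
  induction n with
  | zero => exact hg
  | succ n ih => exact hQ.apply_mem_density (hQ.qiter_mem_density hf n) ih

theorem pchain_sub (hQ : IsQSO μ Q) (f g h : Lp ℝ 1 μ) (n : ℕ) :
    Pchain Q f n (g - h) = Pchain Q f n g - Pchain Q f n h := by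
  induction n with
  | zero => rfl
  | succ n ih => rw [pchain_succ, pchain_succ, pchain_succ, ih, hQ.sub_right_s11]

theorem pchain_smul (hQ : IsQSO μ Q) (c : ℝ) (f g : Lp ℝ 1 μ) (n : ℕ) :
    Pchain Q f n (c • g) = c • Pchain Q f n g := by
  induction n with
  | zero => rfl
  | succ n ih => rw [pchain_succ, pchain_succ, ih, hQ.smul_right]

end IsQSO

theorem norm_pchain_sub_pchain_le_two (hQ : IsQSO μ Q) {f g h : Lp ℝ 1 μ}
    (hf : f ∈ Density μ) (hg : g ∈ Density μ) (hh : h ∈ Density μ) (n : ℕ) :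
    ‖Pchain Q f n g - Pchain Q f n h‖ ≤ 2 := by
  refine (norm_sub_le _ _).trans ?_
  rw [(hQ.pchain_mem_density hf hg n).2, (hQ.pchain_mem_density hf hh n).2, one_add_one_eq_two]

theorem le_supDiff (hQ : IsQSO μ Q) {f g h : Lp ℝ 1 μ}
    (hf : f ∈ Density μ) (hg : g ∈ Density μ) (hh : h ∈ Density μ) (n : ℕ) :
    ‖Pchain Q f n g - Pchain Q f n h‖ ≤ supDiff μ Q n := by
  have two : ∀ f g h : Density μ, ‖Pchain Q f n g - Pchain Q f n h‖ ≤ 2 := fun f g h =>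
    norm_pchain_sub_pchain_le_two hQ f.2 g.2 h.2 n
  calc ‖Pchain Q f n g - Pchain Q f n h‖
      ≤ ⨆ h' : Density μ, ‖Pchain Q f n g - Pchain Q f n h'‖ :=
        le_ciSup ⟨2, Set.forall_mem_range.2 (two ⟨f, hf⟩ ⟨g, hg⟩)⟩ (⟨h, hh⟩ : Density μ)
    _ ≤ ⨆ g' : Density μ, ⨆ h' : Density μ, ‖Pchain Q f n g' - Pchain Q f n h'‖ :=
        le_ciSup ⟨2, Set.forall_mem_range.2 fun g' =>
          Real.iSup_le (two ⟨f, hf⟩ g') zero_le_two⟩ (⟨g, hg⟩ : Density μ)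
    _ ≤ supDiff μ Q n :=
        le_ciSup ⟨2, Set.forall_mem_range.2 fun f' =>
          Real.iSup_le (fun g' => Real.iSup_le (two f' g') zero_le_two) zero_le_two⟩
          (⟨f, hf⟩ : Density μ)

theorem supDiff_le {n : ℕ} {C : ℝ} (hC0 : 0 ≤ C)
    (hC : ∀ f g h, f ∈ Density μ → g ∈ Density μ → h ∈ Density μ →
      ‖Pchain Q f n g - Pchain Q f n h‖ ≤ C) : supDiff μ Q n ≤ C :=
  Real.iSup_le (fun f => Real.iSup_le (fun g => Real.iSup_le (fun h => hC f g h f.2 g.2 h.2)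
    hC0) hC0) hC0

theorem supDiff_nonneg (n : ℕ) : 0 ≤ supDiff μ Q n :=
  Real.iSup_nonneg fun _ => Real.iSup_nonneg fun _ => Real.iSup_nonneg fun _ => norm_nonneg _

theorem supDiff_le_two (hQ : IsQSO μ Q) (n : ℕ) : supDiff μ Q n ≤ 2 :=
  supDiff_le zero_le_two fun _ _ _ hf hg hh => norm_pchain_sub_pchain_le_two hQ hf hg hh n

theorem le_du (hQ : IsQSO μ Q) (hQ' : IsQSO μ Q') {f : Lp ℝ 1 μ} (hf : f ∈ Density μ) :
    ‖Q f f - Q' f f‖ ≤ du μ Q Q' := by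
  refine le_ciSup (f := fun g : Density μ => ‖Q g g - Q' g g‖)
    ⟨2, Set.forall_mem_range.2 fun g => ?_⟩ ⟨f, hf⟩
  refine (norm_sub_le _ _).trans ?_
  rw [(hQ.apply_mem_density g.2 g.2).2, (hQ'.apply_mem_density g.2 g.2).2, one_add_one_eq_two]

theorem du_le {C : ℝ} (hC0 : 0 ≤ C) (hC : ∀ f ∈ Density μ, ‖Q f f - Q' f f‖ ≤ C) :
    du μ Q Q' ≤ C :=
  Real.iSup_le (fun f => hC f f.2) hC0

theorem du_nonneg : 0 ≤ du μ Q Q' :=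
  Real.iSup_nonneg fun _ => norm_nonneg _

theorem normQuasiMixing_of_density_eq_empty (h : Density μ = ∅) : NormQuasiMixing μ Q := by
  have : IsEmpty (Density μ) := Set.isEmpty_coe_sort.2 h
  simp only [NormQuasiMixing, supDiff, Real.iSup_of_isEmpty, tendsto_const_nhds]

theorem norm_pchain_le_of_integral_eq_zero (hQ : IsQSO μ Q) {f w : Lp ℝ 1 μ}
    (hf : f ∈ Density μ) (hw : L1.integral w = 0) (m : ℕ) :
    ‖Pchain Q f m w‖ ≤ ‖w⁺‖ * supDiff μ Q m := by
  obtain ⟨dpos, hdpos, hwpos⟩ := exists_mem_density_eq_norm_smul hf (posPart_nonneg w)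
  obtain ⟨dneg, hdneg, hwneg⟩ := exists_mem_density_eq_norm_smul hf (negPart_nonneg w)
  rw [← L1.norm_posPart_eq_norm_negPart hw] at hwneg
  have hdecomp : w = ‖w⁺‖ • (dpos - dneg) := by
    rw [smul_sub, ← hwpos, ← hwneg, posPart_sub_negPart]
  conv_lhs => rw [hdecomp, hQ.pchain_smul, hQ.pchain_sub, norm_smul, norm_norm]
  exact mul_le_mul_of_nonneg_left (le_supDiff hQ hf hdpos hdneg m) (norm_nonneg w⁺)

theorem supDiff_add_le_mul (hQ : IsQSO μ Q) (n m : ℕ) :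
    supDiff μ Q (n + m) ≤ supDiff μ Q n * supDiff μ Q m := by
  refine supDiff_le (mul_nonneg (supDiff_nonneg n) (supDiff_nonneg m))
    fun f g h hf hg hh => ?_
  rw [pchain_add, pchain_add, ← hQ.pchain_sub]
  calc ‖Pchain Q (Qiter Q n f) m (Pchain Q f n g - Pchain Q f n h)‖
      ≤ ‖(Pchain Q f n g - Pchain Q f n h)⁺‖ * supDiff μ Q m :=
        norm_pchain_le_of_integral_eq_zero hQ (hQ.qiter_mem_density hf n)
          (integral_sub_eq_zero_of_mem_density (hQ.pchain_mem_density hf hg n)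
            (hQ.pchain_mem_density hf hh n)) m
    _ ≤ supDiff μ Q n * supDiff μ Q m :=
      mul_le_mul_of_nonneg_right ((L1.norm_posPart_le _).trans (le_supDiff hQ hf hg hh n))
        (supDiff_nonneg m)

theorem supDiff_antitone (hQ : IsQSO μ Q) : Antitone (supDiff μ Q) := by
  intro m n hmn
  refine supDiff_le (supDiff_nonneg m) fun f g h hf hg hh => ?_
  obtain ⟨k, rfl⟩ := Nat.exists_eq_add_of_le' hmn
  rw [pchain_add, pchain_add]
  exact le_supDiff hQ (hQ.qiter_mem_density hf k) (hQ.pchain_mem_density hf hg k)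
    (hQ.pchain_mem_density hf hh k) m

theorem supDiff_mul_le (hQ : IsQSO μ Q) (N k : ℕ) :
    supDiff μ Q (N * k) ≤ 2 * supDiff μ Q N ^ k := by
  induction k with
  | zero => simpa using supDiff_le_two hQ 0
  | succ k ih =>
    calc supDiff μ Q (N * (k + 1)) ≤ supDiff μ Q (N * k) * supDiff μ Q N := by
          rw [mul_add_one]; exact supDiff_add_le_mul hQ _ _
      _ ≤ 2 * supDiff μ Q N ^ k * supDiff μ Q N :=
          mul_le_mul_of_nonneg_right ih (supDiff_nonneg N)
      _ = 2 * supDiff μ Q N ^ (k + 1) := by ring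

theorem normQuasiMixing_of_supDiff_lt_one (hQ : IsQSO μ Q) {N : ℕ} (hN : supDiff μ Q N < 1) :
    NormQuasiMixing μ Q := by
  refine tendsto_order.2 ⟨fun a ha => Eventually.of_forall fun n => ha.trans_le
    (supDiff_nonneg n), fun ε hε => ?_⟩
  obtain ⟨k, hk⟩ := exists_pow_lt_of_lt_one (half_pos hε) hN
  filter_upwards [eventually_ge_atTop (N * k)] with n hn
  calc supDiff μ Q n ≤ supDiff μ Q (N * k) := supDiff_antitone hQ hn
    _ ≤ 2 * supDiff μ Q N ^ k := supDiff_mul_le hQ N k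
    _ < ε := by linarith

theorem norm_apply_sub_apply_le_three_mul_du (hQ : IsQSO μ Q) (hQ' : IsQSO μ Q')
    {f g : Lp ℝ 1 μ} (hf : f ∈ Density μ) (hg : g ∈ Density μ) :
    ‖Q f g - Q' f g‖ ≤ 3 * du μ Q Q' := by
  set m := (2⁻¹ : ℝ) • (f + g)
  have polarization : ∀ {B : Lp ℝ 1 μ → Lp ℝ 1 μ → Lp ℝ 1 μ}, IsQSO μ B →
      B f g = (2 : ℝ) • B m m - (2⁻¹ : ℝ) • B f f - (2⁻¹ : ℝ) • B g g := by
    intro B hB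
    simp only [m, hB.smul_left, hB.smul_right, hB.add_left, hB.add_right, hB.symm g f]
    module
  have hm : ‖Q m m - Q' m m‖ ≤ du μ Q Q' := le_du hQ hQ' (midpoint_mem_density hf hg)
  have hf' := le_du hQ hQ' hf
  have hg' := le_du hQ hQ' hg
  calc ‖Q f g - Q' f g‖
      = ‖(2 : ℝ) • (Q m m - Q' m m) - (2⁻¹ : ℝ) • (Q f f - Q' f f)
          - (2⁻¹ : ℝ) • (Q g g - Q' g g)‖ := by
        rw [polarization hQ, polarization hQ']
        congr 1
        module
    _ ≤ 2 * ‖Q m m - Q' m m‖ + 2⁻¹ * ‖Q f f - Q' f f‖ + 2⁻¹ * ‖Q g g - Q' g g‖ := by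
        refine (norm_sub_le _ _).trans (add_le_add ((norm_sub_le _ _).trans_eq ?_) ?_)
        · rw [norm_smul, norm_smul, Real.norm_two, norm_inv, Real.norm_two]
        · rw [norm_smul, norm_inv, Real.norm_two]
    _ ≤ 3 * du μ Q Q' := by linarith

theorem norm_apply_sub_apply_le (hQ : IsQSO μ Q) (hQ' : IsQSO μ Q') {a a' b b' : Lp ℝ 1 μ}
    (ha : a ∈ Density μ) (ha' : a' ∈ Density μ) (hb' : b' ∈ Density μ) :
    ‖Q' a' b' - Q a b‖ ≤ 3 * du μ Q Q' + ‖a' - a‖ + ‖b' - b‖ :=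
  calc ‖Q' a' b' - Q a b‖ = ‖-(Q a' b' - Q' a' b') + Q b' (a' - a) + Q a (b' - b)‖ := by
        rw [hQ.sub_right_s11, hQ.sub_right_s11, hQ.symm b' a', hQ.symm b' a]
        congr 1
        abel
    _ ≤ ‖Q a' b' - Q' a' b'‖ + ‖Q b' (a' - a)‖ + ‖Q a (b' - b)‖ := by
        refine (norm_add_le _ _).trans (add_le_add_left ((norm_add_le _ _).trans_eq ?_) _)
        rw [norm_neg]
    _ ≤ 3 * du μ Q Q' + ‖a' - a‖ + ‖b' - b‖ := by
        gcongr
        · exact norm_apply_sub_apply_le_three_mul_du hQ hQ' ha' hb'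
        · exact hQ.norm_apply_le_of_mem_density hb' _
        · exact hQ.norm_apply_le_of_mem_density ha _

theorem norm_qiter_sub_qiter_le (hQ : IsQSO μ Q) (hQ' : IsQSO μ Q') {f : Lp ℝ 1 μ}
    (hf : f ∈ Density μ) (n : ℕ) :
    ‖Qiter Q' n f - Qiter Q n f‖ ≤ 5 ^ n * du μ Q Q' := by
  induction n with
  | zero => simpa [Qiter] using du_nonneg
  | succ n ih =>
    rw [qiter_succ_apply, qiter_succ_apply]
    refine (norm_apply_sub_apply_le hQ hQ' (hQ.qiter_mem_density hf n)
      (hQ'.qiter_mem_density hf n) (hQ'.qiter_mem_density hf n)).trans ?_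
    have hdu : 0 ≤ du μ Q Q' := du_nonneg
    have h5 : (1 : ℝ) ≤ 5 ^ n := one_le_pow₀ (by norm_num)
    rw [pow_succ]
    nlinarith

theorem norm_pchain_sub_pchain_le (hQ : IsQSO μ Q) (hQ' : IsQSO μ Q') {f g : Lp ℝ 1 μ}
    (hf : f ∈ Density μ) (hg : g ∈ Density μ) (n : ℕ) :
    ‖Pchain Q' f n g - Pchain Q f n g‖ ≤ 5 ^ n * du μ Q Q' := by
  induction n with
  | zero => simpa [Pchain] using du_nonneg
  | succ n ih =>
    rw [pchain_succ, pchain_succ]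
    refine (norm_apply_sub_apply_le hQ hQ' (hQ.qiter_mem_density hf n)
      (hQ'.qiter_mem_density hf n) (hQ'.pchain_mem_density hf hg n)).trans ?_
    have hiter := norm_qiter_sub_qiter_le hQ hQ' hf n
    have hdu : 0 ≤ du μ Q Q' := du_nonneg
    have h5 : (1 : ℝ) ≤ 5 ^ n := one_le_pow₀ (by norm_num)
    rw [pow_succ]
    nlinarith

theorem supDiff_le_add_du (hQ : IsQSO μ Q) (hQ' : IsQSO μ Q') (n : ℕ) :
    supDiff μ Q' n ≤ supDiff μ Q n + 2 * 5 ^ n * du μ Q Q' := by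
  refine supDiff_le (add_nonneg (supDiff_nonneg n) (mul_nonneg (by positivity) du_nonneg))
    fun f g h hf hg hh => ?_
  calc ‖Pchain Q' f n g - Pchain Q' f n h‖
      ≤ ‖Pchain Q' f n g - Pchain Q f n g‖ + ‖Pchain Q f n g - Pchain Q f n h‖
        + ‖Pchain Q f n h - Pchain Q' f n h‖ := by
        simpa only [dist_eq_norm] using dist_triangle4 (Pchain Q' f n g) (Pchain Q f n g)
          (Pchain Q f n h) (Pchain Q' f n h)
    _ ≤ 5 ^ n * du μ Q Q' + supDiff μ Q n + 5 ^ n * du μ Q Q' := by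
        gcongr
        · exact norm_pchain_sub_pchain_le hQ hQ' hf hg n
        · exact le_supDiff hQ hf hg hh n
        · exact (norm_sub_rev _ _).trans_le (norm_pchain_sub_pchain_le hQ hQ' hf hh n)
    _ = supDiff μ Q n + 2 * 5 ^ n * du μ Q Q' := by ring

theorem NormQuasiMixing.exists_pos_forall_du_lt (hQ : IsQSO μ Q) (hmix : NormQuasiMixing μ Q) :
    ∃ ε > (0 : ℝ), ∀ Q' : Lp ℝ 1 μ → Lp ℝ 1 μ → Lp ℝ 1 μ,
      IsQSO μ Q' → du μ Q Q' < ε → NormQuasiMixing μ Q' := by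
  obtain ⟨N, hN⟩ := (hmix.eventually (gt_mem_nhds (by norm_num : (0 : ℝ) < 2⁻¹))).exists
  refine ⟨(4 * 5 ^ N)⁻¹, by positivity, fun Q' hQ' hdu => ?_⟩
  refine normQuasiMixing_of_supDiff_lt_one hQ' (N := N) ?_
  have hsmall : 2 * 5 ^ N * du μ Q Q' < 2⁻¹ := by
    calc 2 * 5 ^ N * du μ Q Q' < 2 * 5 ^ N * (4 * 5 ^ N)⁻¹ := by gcongr
      _ = 2⁻¹ := by field_simp; norm_num
  linarith [supDiff_le_add_du hQ hQ' N]

noncomputable def mixWithConst (Q : Lp ℝ 1 μ → Lp ℝ 1 μ → Lp ℝ 1 μ) (δ : ℝ) (h₀ : Lp ℝ 1 μ)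
    (f g : Lp ℝ 1 μ) : Lp ℝ 1 μ :=
  (1 - δ) • Q f g + (δ * (L1.integral f * L1.integral g)) • h₀

variable {δ : ℝ} {h₀ : Lp ℝ 1 μ}

theorem isQSO_mixWithConst (hQ : IsQSO μ Q) (hδ₀ : 0 ≤ δ) (hδ₁ : δ ≤ 1)
    (hh₀ : h₀ ∈ Density μ) : IsQSO μ (mixWithConst Q δ h₀) where
  add_left f f' g := by
    simp only [mixWithConst, hQ.add_left, L1.integral_add]
    module
  smul_left c f g := by
    simp only [mixWithConst, hQ.smul_left, L1.integral_smul, smul_eq_mul]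
    module
  add_right f g g' := by
    simp only [mixWithConst, hQ.add_right, L1.integral_add]
    module
  smul_right c f g := by
    simp only [mixWithConst, hQ.smul_right, L1.integral_smul, smul_eq_mul]
    module
  nonneg f g hf hg := by
    rw [mixWithConst, L1.integral_eq_norm_of_nonneg hf, L1.integral_eq_norm_of_nonneg hg]
    exact add_nonneg (smul_nonneg (sub_nonneg.2 hδ₁) (hQ.nonneg f g hf hg))
      (smul_nonneg (by positivity) hh₀.1)
  symm f g := by
    rw [mixWithConst, mixWithConst, hQ.symm f g, mul_comm (L1.integral f)]
  norm_mul f g hf hg := by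
    rw [mixWithConst, L1.integral_eq_norm_of_nonneg hf, L1.integral_eq_norm_of_nonneg hg,
      L1.norm_add_of_nonneg (smul_nonneg (sub_nonneg.2 hδ₁) (hQ.nonneg f g hf hg))
        (smul_nonneg (by positivity) hh₀.1),
      norm_smul, norm_smul, hQ.norm_mul f g hf hg, hh₀.2, Real.norm_of_nonneg (sub_nonneg.2 hδ₁),
      Real.norm_of_nonneg (by positivity)]
    ring

theorem mixWithConst_apply_of_integral_eq_zero (f : Lp ℝ 1 μ) {w : Lp ℝ 1 μ}
    (hw : L1.integral w = 0) : mixWithConst Q δ h₀ f w = (1 - δ) • Q f w := by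
  rw [mixWithConst, hw, mul_zero, mul_zero, zero_smul, add_zero]

theorem norm_pchain_mixWithConst_sub_le (hQ : IsQSO μ Q) (hδ₀ : 0 ≤ δ) (hδ₁ : δ ≤ 1)
    (hh₀ : h₀ ∈ Density μ) {f g h : Lp ℝ 1 μ} (hf : f ∈ Density μ) (hg : g ∈ Density μ)
    (hh : h ∈ Density μ) (n : ℕ) :
    ‖Pchain (mixWithConst Q δ h₀) f n g - Pchain (mixWithConst Q δ h₀) f n h‖ ≤
      2 * (1 - δ) ^ n := by
  have hQ' := isQSO_mixWithConst hQ hδ₀ hδ₁ hh₀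
  induction n with
  | zero => simpa using norm_pchain_sub_pchain_le_two hQ' hf hg hh 0
  | succ n ih =>
    have hw := integral_sub_eq_zero_of_mem_density (hQ'.pchain_mem_density hf hg n)
      (hQ'.pchain_mem_density hf hh n)
    rw [pchain_succ, pchain_succ, ← hQ'.sub_right_s11, mixWithConst_apply_of_integral_eq_zero _ hw,
      norm_smul, Real.norm_of_nonneg (sub_nonneg.2 hδ₁)]
    calc (1 - δ) * ‖Q (Qiter (mixWithConst Q δ h₀) n f)
          (Pchain (mixWithConst Q δ h₀) f n g - Pchain (mixWithConst Q δ h₀) f n h)‖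
        ≤ (1 - δ) * (2 * (1 - δ) ^ n) := by
          gcongr
          exact (hQ.norm_apply_le_of_mem_density (hQ'.qiter_mem_density hf n) _).trans ih
      _ = 2 * (1 - δ) ^ (n + 1) := by ring

theorem normQuasiMixing_mixWithConst (hQ : IsQSO μ Q) (hδ₀ : 0 < δ) (hδ₁ : δ ≤ 1)
    (hh₀ : h₀ ∈ Density μ) : NormQuasiMixing μ (mixWithConst Q δ h₀) := by
  have hδ' : 0 ≤ 1 - δ := sub_nonneg.2 hδ₁
  have hbound : ∀ n, supDiff μ (mixWithConst Q δ h₀) n ≤ 2 * (1 - δ) ^ n := fun n =>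
    supDiff_le (by positivity) fun f g h hf hg hh =>
      norm_pchain_mixWithConst_sub_le hQ hδ₀.le hδ₁ hh₀ hf hg hh n
  have hlim : Tendsto (fun n : ℕ => 2 * (1 - δ) ^ n) atTop (𝓝 0) := by
    simpa using (tendsto_pow_atTop_nhds_zero_of_lt_one hδ' (sub_lt_self 1 hδ₀)).const_mul 2
  exact squeeze_zero (fun n => supDiff_nonneg n) hbound hlim

theorem du_mixWithConst_le (hQ : IsQSO μ Q) (hδ₀ : 0 ≤ δ) (hh₀ : h₀ ∈ Density μ) :
    du μ Q (mixWithConst Q δ h₀) ≤ 2 * δ := by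
  refine du_le (by positivity) fun f hf => ?_
  have hdiff : Q f f - mixWithConst Q δ h₀ f f = δ • (Q f f - h₀) := by
    rw [mixWithConst, integral_eq_one_of_mem_density hf, mul_one, mul_one]
    module
  rw [hdiff, norm_smul, Real.norm_of_nonneg hδ₀, mul_comm]
  gcongr
  calc ‖Q f f - h₀‖ ≤ ‖Q f f‖ + ‖h₀‖ := norm_sub_le _ _
    _ = 2 := by rw [(hQ.apply_mem_density hf hf).2, hh₀.2, one_add_one_eq_two]

theorem exists_normQuasiMixing_du_lt (hQ : IsQSO μ Q) {ε : ℝ} (hε : 0 < ε) :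
    ∃ Q' : Lp ℝ 1 μ → Lp ℝ 1 μ → Lp ℝ 1 μ,
      IsQSO μ Q' ∧ NormQuasiMixing μ Q' ∧ du μ Q Q' < ε := by
  rcases (Density μ).eq_empty_or_nonempty with hempty | ⟨h₀, hh₀⟩
  · exact ⟨Q, hQ, normQuasiMixing_of_density_eq_empty hempty, by simpa [du] using hε⟩
  set δ := min (ε / 4) 1
  have hδ₀ : 0 < δ := by positivity
  have hδ₁ : δ ≤ 1 := min_le_right _ _
  refine ⟨mixWithConst Q δ h₀, isQSO_mixWithConst hQ hδ₀.le hδ₁ hh₀,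
    normQuasiMixing_mixWithConst hQ hδ₀ hδ₁ hh₀, ?_⟩
  linarith [du_mixWithConst_le hQ hδ₀.le hh₀, min_le_left (ε / 4) 1]

end

theorem normQuasiMixing_dense_open_general {X : Type*} [MeasurableSpace X]
    (μ : Measure X) :
    (∀ Q : Lp ℝ 1 μ → Lp ℝ 1 μ → Lp ℝ 1 μ, IsQSO μ Q → ∀ ε > (0 : ℝ),
      ∃ Q' : Lp ℝ 1 μ → Lp ℝ 1 μ → Lp ℝ 1 μ,
        IsQSO μ Q' ∧ NormQuasiMixing μ Q' ∧ du μ Q Q' < ε) ∧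
    (∀ Q : Lp ℝ 1 μ → Lp ℝ 1 μ → Lp ℝ 1 μ, IsQSO μ Q → NormQuasiMixing μ Q →
      ∃ ε > (0 : ℝ), ∀ Q' : Lp ℝ 1 μ → Lp ℝ 1 μ → Lp ℝ 1 μ,
        IsQSO μ Q' → du μ Q Q' < ε → NormQuasiMixing μ Q') :=
  ⟨fun _ hQ _ hε => exists_normQuasiMixing_du_lt hQ hε,
    fun _ hQ hmix => hmix.exists_pos_forall_du_lt hQ⟩

/-- The set `𝔔_nqm` of norm quasi-mixing quadratic stochastic operators is a
dense and open subset of the set `𝔔` of all quadratic stochastic operators for the topology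
induced by the metric `d_u` (stated metrically: every QSO can be `d_u`-approximated by norm
quasi-mixing QSOs, and around every norm quasi-mixing QSO there is a `d_u`-ball of QSOs all
of which are norm quasi-mixing). The setting assumes `dim L¹ > 1`. -/
theorem normQuasiMixing_dense_open {X : Type*} [MeasurableSpace X]
    (μ : Measure X) [SigmaFinite μ]
    (hdim : 1 < Module.rank ℝ (Lp ℝ 1 μ)) :
    (∀ Q : Lp ℝ 1 μ → Lp ℝ 1 μ → Lp ℝ 1 μ, IsQSO μ Q → ∀ ε > (0 : ℝ),
      ∃ Q' : Lp ℝ 1 μ → Lp ℝ 1 μ → Lp ℝ 1 μ,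
        IsQSO μ Q' ∧ NormQuasiMixing μ Q' ∧ du μ Q Q' < ε) ∧
    (∀ Q : Lp ℝ 1 μ → Lp ℝ 1 μ → Lp ℝ 1 μ, IsQSO μ Q → NormQuasiMixing μ Q →
      ∃ ε > (0 : ℝ), ∀ Q' : Lp ℝ 1 μ → Lp ℝ 1 μ → Lp ℝ 1 μ,
        IsQSO μ Q' → du μ Q Q' < ε → NormQuasiMixing μ Q') :=
  normQuasiMixing_dense_open_general μ
end
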